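/- arXiv:0910.2220 — 14 statements merged into one kernel-verified Lean document; each statement's English description precedes it below -/
import Mathlib

section
/- If the even part a₀ of a Lie antialgebra a is spanned by products of odd elements (i.e., a₀ is generated by a₁), then the associativity of a₀ (axiom LA0) follows from the axioms (LA1) half-action, (LA2) Leibniz, and (LA3) odd Jacobi. More precisely, for all x, y, z in a₀ with x = a·b for some a, b in a₁, one has (x·y)·z = (x·z)·y, and hence a₀ is associative. -/
/-!
For odd `a, b` and even `y, z`, expanding `((a·b)·y)·z` with the Leibniz rule (LA2) twice and
folding the resulting double actions `z·(y·c)` with the half-action rule (LA1) yields an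
expression symmetric in `y` and `z`. Hence right multiplications by even elements commute on
products of odd elements, so on all of `a₀` by linearity, and together with commutativity of
`a₀` this is associativity: `x·(y·z) = (y·z)·x = (y·x)·z = (x·y)·z`.
-/

section LieAntialgebra

variable {K A : Type*} [Field K] [AddCommGroup A] [Module K A]
  (mul : A →ₗ[K] A →ₗ[K] A) {A0 A1 : Submodule K A}

theorem mul_odd_odd_mul_even_eq
    (h11 : ∀ a ∈ A1, ∀ b ∈ A1, mul a b ∈ A0)
    (hcomm00 : ∀ x ∈ A0, ∀ y ∈ A0, mul x y = mul y x)
    (hLA2 : ∀ x ∈ A0, ∀ y1 ∈ A1, ∀ y2 ∈ A1,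
      mul x (mul y1 y2) = mul (mul x y1) y2 + mul y1 (mul x y2))
    ⦃a b z : A⦄ (ha : a ∈ A1) (hb : b ∈ A1) (hz : z ∈ A0) :
    mul (mul a b) z = mul (mul z a) b + mul a (mul z b) := by
  rw [hcomm00 _ (h11 a ha b hb) z hz, hLA2 z hz a ha b hb]

theorem mul_mul_odd_odd_mul_even_mul_even_eq
    (h01 : ∀ x ∈ A0, ∀ a ∈ A1, mul x a ∈ A1)
    (h11 : ∀ a ∈ A1, ∀ b ∈ A1, mul a b ∈ A0)
    (hcomm00 : ∀ x ∈ A0, ∀ y ∈ A0, mul x y = mul y x)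
    (hLA1 : ∀ x1 ∈ A0, ∀ x2 ∈ A0, ∀ y ∈ A1,
      mul x1 (mul x2 y) = (1/2 : K) • mul (mul x1 x2) y)
    (hLA2 : ∀ x ∈ A0, ∀ y1 ∈ A1, ∀ y2 ∈ A1,
      mul x (mul y1 y2) = mul (mul x y1) y2 + mul y1 (mul x y2))
    {a b y z : A} (ha : a ∈ A1) (hb : b ∈ A1) (hy : y ∈ A0) (hz : z ∈ A0) :
    mul (mul (mul a b) y) z =
      (1/2 : K) • mul (mul (mul y z) a) b + (1/2 : K) • mul a (mul (mul y z) b)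
        + mul (mul y a) (mul z b) + mul (mul z a) (mul y b) := by
  have leibniz := mul_odd_odd_mul_even_eq mul h11 hcomm00 hLA2
  rw [leibniz ha hb hy, map_add, LinearMap.add_apply, leibniz (h01 y hy a ha) hb hz,
    leibniz ha (h01 y hy b hb) hz, hLA1 z hz y hy a ha, hLA1 z hz y hy b hb,
    hcomm00 z hz y hy, map_smul, map_smul, LinearMap.smul_apply]
  abel

theorem mul_odd_odd_mul_right_comm
    (h01 : ∀ x ∈ A0, ∀ a ∈ A1, mul x a ∈ A1)
    (h11 : ∀ a ∈ A1, ∀ b ∈ A1, mul a b ∈ A0)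
    (hcomm00 : ∀ x ∈ A0, ∀ y ∈ A0, mul x y = mul y x)
    (hLA1 : ∀ x1 ∈ A0, ∀ x2 ∈ A0, ∀ y ∈ A1,
      mul x1 (mul x2 y) = (1/2 : K) • mul (mul x1 x2) y)
    (hLA2 : ∀ x ∈ A0, ∀ y1 ∈ A1, ∀ y2 ∈ A1,
      mul x (mul y1 y2) = mul (mul x y1) y2 + mul y1 (mul x y2))
    {a b y z : A} (ha : a ∈ A1) (hb : b ∈ A1) (hy : y ∈ A0) (hz : z ∈ A0) :
    mul (mul (mul a b) y) z = mul (mul (mul a b) z) y := by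
  rw [mul_mul_odd_odd_mul_even_mul_even_eq mul h01 h11 hcomm00 hLA1 hLA2 ha hb hy hz,
    mul_mul_odd_odd_mul_even_mul_even_eq mul h01 h11 hcomm00 hLA1 hLA2 ha hb hz hy,
    hcomm00 z hz y hy]
  abel

theorem mul_right_comm_of_mem_span {s : Set A} {x y z : A}
    (hs : ∀ x ∈ s, mul (mul x y) z = mul (mul x z) y) (hx : x ∈ Submodule.span K s) :
    mul (mul x y) z = mul (mul x z) y :=
  LinearMap.eqOn_span (f := mul.flip z ∘ₗ mul.flip y) (g := mul.flip y ∘ₗ mul.flip z) hs hx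

theorem mul_assoc_of_mul_right_comm
    (h00 : ∀ x ∈ A0, ∀ y ∈ A0, mul x y ∈ A0)
    (hcomm00 : ∀ x ∈ A0, ∀ y ∈ A0, mul x y = mul y x)
    (hright : ∀ x ∈ A0, ∀ y ∈ A0, ∀ z ∈ A0, mul (mul x y) z = mul (mul x z) y)
    {x y z : A} (hx : x ∈ A0) (hy : y ∈ A0) (hz : z ∈ A0) :
    mul x (mul y z) = mul (mul x y) z := by
  rw [hcomm00 x hx _ (h00 y hy z hz), hright y hy z hz x hx, hcomm00 y hy x hx]

end LieAntialgebra

theorem liealgebra_even_part_assoc_of_generated_by_odd_general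
    {K : Type*} [Field K] {A : Type*} [AddCommGroup A] [Module K A]
    (mul : A →ₗ[K] A →ₗ[K] A) (A0 A1 : Submodule K A)
    (h00 : ∀ x ∈ A0, ∀ y ∈ A0, mul x y ∈ A0)
    (h01 : ∀ x ∈ A0, ∀ a ∈ A1, mul x a ∈ A1)
    (h11 : ∀ a ∈ A1, ∀ b ∈ A1, mul a b ∈ A0)
    (hcomm00 : ∀ x ∈ A0, ∀ y ∈ A0, mul x y = mul y x)
    (hLA1 : ∀ x1 ∈ A0, ∀ x2 ∈ A0, ∀ y ∈ A1,
      mul x1 (mul x2 y) = (1/2 : K) • mul (mul x1 x2) y)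
    (hLA2 : ∀ x ∈ A0, ∀ y1 ∈ A1, ∀ y2 ∈ A1,
      mul x (mul y1 y2) = mul (mul x y1) y2 + mul y1 (mul x y2))
    (hspan : A0 ≤ Submodule.span K {z | ∃ a ∈ A1, ∃ b ∈ A1, z = mul a b}) :
    (∀ a ∈ A1, ∀ b ∈ A1, ∀ y ∈ A0, ∀ z ∈ A0,
      mul (mul (mul a b) y) z = mul (mul (mul a b) z) y) ∧
    (∀ x ∈ A0, ∀ y ∈ A0, ∀ z ∈ A0,
      mul x (mul y z) = mul (mul x y) z) := by
  have hodd : ∀ a ∈ A1, ∀ b ∈ A1, ∀ y ∈ A0, ∀ z ∈ A0,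
      mul (mul (mul a b) y) z = mul (mul (mul a b) z) y :=
    fun a ha b hb y hy z hz =>
      mul_odd_odd_mul_right_comm mul h01 h11 hcomm00 hLA1 hLA2 ha hb hy hz
  have hright : ∀ x ∈ A0, ∀ y ∈ A0, ∀ z ∈ A0, mul (mul x y) z = mul (mul x z) y := by
    intro x hx y hy z hz
    refine mul_right_comm_of_mem_span mul ?_ (hspan hx)
    rintro _ ⟨a, ha, b, hb, rfl⟩
    exact hodd a ha b hb y hy z hz
  exact ⟨hodd, fun x hx y hy z hz =>
    mul_assoc_of_mul_right_comm mul h00 hcomm00 hright hx hy hz⟩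

/-- If the even part `A0` of a Lie antialgebra is spanned by products of
odd elements, then associativity of `A0` (axiom LA0) follows from (LA1), (LA2), (LA3).
More precisely, for `x = a·b` with `a, b` odd, `(x·y)·z = (x·z)·y` for all even `y, z`,
and hence `A0` is associative. -/
theorem liealgebra_even_part_assoc_of_generated_by_odd
    {K : Type*} [Field K] [CharZero K] {A : Type*} [AddCommGroup A] [Module K A]
    (mul : A →ₗ[K] A →ₗ[K] A) (A0 A1 : Submodule K A)
    (h00 : ∀ x ∈ A0, ∀ y ∈ A0, mul x y ∈ A0)
    (h01 : ∀ x ∈ A0, ∀ a ∈ A1, mul x a ∈ A1)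
    (h11 : ∀ a ∈ A1, ∀ b ∈ A1, mul a b ∈ A0)
    (hcomm00 : ∀ x ∈ A0, ∀ y ∈ A0, mul x y = mul y x)
    (hcomm01 : ∀ x ∈ A0, ∀ a ∈ A1, mul x a = mul a x)
    (hanti : ∀ a ∈ A1, ∀ b ∈ A1, mul a b = - mul b a)
    (hLA1 : ∀ x1 ∈ A0, ∀ x2 ∈ A0, ∀ y ∈ A1,
      mul x1 (mul x2 y) = (1/2 : K) • mul (mul x1 x2) y)
    (hLA2 : ∀ x ∈ A0, ∀ y1 ∈ A1, ∀ y2 ∈ A1,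
      mul x (mul y1 y2) = mul (mul x y1) y2 + mul y1 (mul x y2))
    (hLA3 : ∀ y1 ∈ A1, ∀ y2 ∈ A1, ∀ y3 ∈ A1,
      mul y1 (mul y2 y3) + mul y2 (mul y3 y1) + mul y3 (mul y1 y2) = 0)
    (hspan : A0 ≤ Submodule.span K {z | ∃ a ∈ A1, ∃ b ∈ A1, z = mul a b}) :
    (∀ a ∈ A1, ∀ b ∈ A1, ∀ y ∈ A0, ∀ z ∈ A0,
      mul (mul (mul a b) y) z = mul (mul (mul a b) z) y) ∧
    (∀ x ∈ A0, ∀ y ∈ A0, ∀ z ∈ A0,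
      mul x (mul y z) = mul (mul x y) z) :=
  liealgebra_even_part_assoc_of_generated_by_odd_general mul A0 A1 h00 h01 h11 hcomm00 hLA1 hLA2
    hspan
end

section
/- For any two elements x, y in the even part a₀ of a Lie antialgebra, and any elements a, b in the odd part a₁, the expression ((ab)y)z = ½(ab)(yz) + (ay)(bz) + (az)(by); in particular ((ab)y)z is symmetric in y and z. -/
/-!
Commuting `(ab)y` past `z` and expanding both `ab` and `z` as derivations (LA2), the two
terms of the form `z (y c)` collapse by (LA1) to `½ (yz) c`; these recombine, again by
(LA2), into `½ (ab)(yz)`, and the two cross terms are `(ay)(bz) + (az)(by)`. The right-hand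
side is visibly symmetric in `y` and `z`.
-/

namespace LieAntialgebra

variable {K : Type*} [Field K] {A : Type*} [AddCommGroup A] [Module K A]
  (mul : A →ₗ[K] A →ₗ[K] A) {A0 A1 : Submodule K A}

theorem odd_mul_odd_mul_even
    (h11 : ∀ a ∈ A1, ∀ b ∈ A1, mul a b ∈ A0)
    (hcomm00 : ∀ x ∈ A0, ∀ y ∈ A0, mul x y = mul y x)
    (hLA2 : ∀ x ∈ A0, ∀ y1 ∈ A1, ∀ y2 ∈ A1,
      mul x (mul y1 y2) = mul (mul x y1) y2 + mul y1 (mul x y2))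
    {a b : A} (ha : a ∈ A1) (hb : b ∈ A1) {x : A} (hx : x ∈ A0) :
    mul (mul a b) x = mul (mul x a) b + mul a (mul x b) := by
  rw [hcomm00 _ (h11 a ha b hb) x hx, hLA2 x hx a ha b hb]

theorem odd_mul_odd_mul_even_mul_even
    (h00 : ∀ x ∈ A0, ∀ y ∈ A0, mul x y ∈ A0)
    (h01 : ∀ x ∈ A0, ∀ a ∈ A1, mul x a ∈ A1)
    (h11 : ∀ a ∈ A1, ∀ b ∈ A1, mul a b ∈ A0)
    (hcomm00 : ∀ x ∈ A0, ∀ y ∈ A0, mul x y = mul y x)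
    (hcomm01 : ∀ x ∈ A0, ∀ a ∈ A1, mul x a = mul a x)
    (hLA1 : ∀ x1 ∈ A0, ∀ x2 ∈ A0, ∀ y ∈ A1,
      mul x1 (mul x2 y) = (1/2 : K) • mul (mul x1 x2) y)
    (hLA2 : ∀ x ∈ A0, ∀ y1 ∈ A1, ∀ y2 ∈ A1,
      mul x (mul y1 y2) = mul (mul x y1) y2 + mul y1 (mul x y2))
    {a b y z : A} (ha : a ∈ A1) (hb : b ∈ A1) (hy : y ∈ A0) (hz : z ∈ A0) :
    mul (mul (mul a b) y) z =
      (1/2 : K) • mul (mul a b) (mul y z) + mul (mul a y) (mul b z)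
        + mul (mul a z) (mul b y) := by
  have expand {x : A} (hx : x ∈ A0) := odd_mul_odd_mul_even mul h11 hcomm00 hLA2 ha hb hx
  calc mul (mul (mul a b) y) z
      = mul z (mul (mul y a) b + mul a (mul y b)) := by
        rw [hcomm00 _ (h00 _ (h11 a ha b hb) y hy) z hz, expand hy]
    _ = (mul (mul z (mul y a)) b + mul (mul y a) (mul z b))
        + (mul (mul z a) (mul y b) + mul a (mul z (mul y b))) := by
        rw [map_add, hLA2 z hz _ (h01 y hy a ha) b hb, hLA2 z hz a ha _ (h01 y hy b hb)]
    _ = ((1/2 : K) • mul (mul (mul y z) a) b + mul (mul y a) (mul z b))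
        + (mul (mul z a) (mul y b) + (1/2 : K) • mul a (mul (mul y z) b)) := by
        rw [hLA1 z hz y hy a ha, hLA1 z hz y hy b hb, hcomm00 z hz y hy,
          map_smul, LinearMap.smul_apply, map_smul]
    _ = (1/2 : K) • mul (mul a b) (mul y z) + mul (mul a y) (mul b z)
        + mul (mul a z) (mul b y) := by
        rw [expand (h00 y hy z hz), hcomm01 y hy a ha, hcomm01 z hz b hb,
          hcomm01 z hz a ha, hcomm01 y hy b hb, smul_add]
        abel

end LieAntialgebra

theorem liealgebra_even_product_identity_general
    {K : Type*} [Field K] {A : Type*} [AddCommGroup A] [Module K A]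
    (mul : A →ₗ[K] A →ₗ[K] A) (A0 A1 : Submodule K A)
    (h00 : ∀ x ∈ A0, ∀ y ∈ A0, mul x y ∈ A0)
    (h01 : ∀ x ∈ A0, ∀ a ∈ A1, mul x a ∈ A1)
    (h11 : ∀ a ∈ A1, ∀ b ∈ A1, mul a b ∈ A0)
    (hcomm00 : ∀ x ∈ A0, ∀ y ∈ A0, mul x y = mul y x)
    (hcomm01 : ∀ x ∈ A0, ∀ a ∈ A1, mul x a = mul a x)
    (hLA1 : ∀ x1 ∈ A0, ∀ x2 ∈ A0, ∀ y ∈ A1,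
      mul x1 (mul x2 y) = (1/2 : K) • mul (mul x1 x2) y)
    (hLA2 : ∀ x ∈ A0, ∀ y1 ∈ A1, ∀ y2 ∈ A1,
      mul x (mul y1 y2) = mul (mul x y1) y2 + mul y1 (mul x y2)) :
    (∀ a ∈ A1, ∀ b ∈ A1, ∀ y ∈ A0, ∀ z ∈ A0,
      mul (mul (mul a b) y) z =
        (1/2 : K) • mul (mul a b) (mul y z)
          + mul (mul a y) (mul b z) + mul (mul a z) (mul b y)) ∧
    (∀ a ∈ A1, ∀ b ∈ A1, ∀ y ∈ A0, ∀ z ∈ A0,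
      mul (mul (mul a b) y) z = mul (mul (mul a b) z) y) := by
  have identity {a b y z : A} (ha : a ∈ A1) (hb : b ∈ A1) (hy : y ∈ A0) (hz : z ∈ A0) :=
    LieAntialgebra.odd_mul_odd_mul_even_mul_even mul h00 h01 h11 hcomm00 hcomm01 hLA1 hLA2
      ha hb hy hz
  refine ⟨fun a ha b hb y hy z hz => identity ha hb hy hz, fun a ha b hb y hy z hz => ?_⟩
  rw [identity ha hb hy hz, identity ha hb hz hy, hcomm00 y hy z hz]
  abel

/-- In a Lie antialgebra, for odd `a, b` and even `y, z`:
`((ab)y)z = ½(ab)(yz) + (ay)(bz) + (az)(by)`; in particular `((ab)y)z` is symmetric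
in `y` and `z`. -/
theorem liealgebra_even_product_identity
    {K : Type*} [Field K] [CharZero K] {A : Type*} [AddCommGroup A] [Module K A]
    (mul : A →ₗ[K] A →ₗ[K] A) (A0 A1 : Submodule K A)
    (h00 : ∀ x ∈ A0, ∀ y ∈ A0, mul x y ∈ A0)
    (h01 : ∀ x ∈ A0, ∀ a ∈ A1, mul x a ∈ A1)
    (h11 : ∀ a ∈ A1, ∀ b ∈ A1, mul a b ∈ A0)
    (hcomm00 : ∀ x ∈ A0, ∀ y ∈ A0, mul x y = mul y x)
    (hcomm01 : ∀ x ∈ A0, ∀ a ∈ A1, mul x a = mul a x)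
    (hanti : ∀ a ∈ A1, ∀ b ∈ A1, mul a b = - mul b a)
    (hLA1 : ∀ x1 ∈ A0, ∀ x2 ∈ A0, ∀ y ∈ A1,
      mul x1 (mul x2 y) = (1/2 : K) • mul (mul x1 x2) y)
    (hLA2 : ∀ x ∈ A0, ∀ y1 ∈ A1, ∀ y2 ∈ A1,
      mul x (mul y1 y2) = mul (mul x y1) y2 + mul y1 (mul x y2))
    (hLA3 : ∀ y1 ∈ A1, ∀ y2 ∈ A1, ∀ y3 ∈ A1,
      mul y1 (mul y2 y3) + mul y2 (mul y3 y1) + mul y3 (mul y1 y2) = 0) :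
    (∀ a ∈ A1, ∀ b ∈ A1, ∀ y ∈ A0, ∀ z ∈ A0,
      mul (mul (mul a b) y) z =
        (1/2 : K) • mul (mul a b) (mul y z)
          + mul (mul a y) (mul b z) + mul (mul a z) (mul b y)) ∧
    (∀ a ∈ A1, ∀ b ∈ A1, ∀ y ∈ A0, ∀ z ∈ A0,
      mul (mul (mul a b) y) z = mul (mul (mul a b) z) y) :=
  liealgebra_even_product_identity_general mul A0 A1 h00 h01 h11 hcomm00 hcomm01 hLA1 hLA2
end

section
/- The conformal Lie antialgebra AK(1) is a Lie antialgebra: the superalgebra with even basis {εₙ : n ∈ ℤ} and odd basis {aᵢ : i ∈ ℤ + ½}, with products εₙ·εₘ = ε_{n+m}, εₙ·aᵢ = aᵢ·εₙ = ½a_{n+i}, aᵢ·aⱼ = ½(i−j)ε_{i+j}, satisfies the Lie antialgebra axioms (LA0)-(LA3). -/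
/-!
Both the even and the odd part of `AK(1)` are copies of the Laurent polynomials
`ℚ[t, t⁻¹] = ℚ[ℤ]`, via `εₙ ↦ tⁿ` and `a_{p+½} ↦ tᵖ`. With `D = t d/dt` the product becomes
`f·g = fg`, `f·b = ½ fb` and `a·b = ½ t (Da·b − a·Db)`. These formulas define a Lie antialgebra
on `A × A` for every commutative `ℚ`-algebra `A`, derivation `D` and `s ∈ A`: (LA0) and (LA1) are
associativity and commutativity of `A`, (LA2) is the Leibniz rule for `D`, and (LA3) is a
polynomial identity.
-/

/-- The underlying space of the conformal Lie antialgebra `AK(1)`: the first component is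
the coordinates of an element on the even basis `{εₙ, n ∈ ℤ}`, the second the coordinates
on the odd basis `{aᵢ, i ∈ ℤ + ½}`, where the half-integer index `i = p + ½` is encoded
by the integer `p`. -/
abbrev AK1 : Type := (ℤ →₀ ℚ) × (ℤ →₀ ℚ)

/-- The product of `AK(1)`, the bilinear extension of `εₙ·εₘ = ε_{n+m}`,
`εₙ·aᵢ = aᵢ·εₙ = ½ a_{n+i}`, `aᵢ·aⱼ = ½(i−j) ε_{i+j}`.  In the encoding `i = p + ½`,
`j = q + ½` this reads `εₙ·a_{p+½} = ½ a_{(n+p)+½}` and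
`a_{p+½}·a_{q+½} = ½(p−q) ε_{p+q+1}`. -/
noncomputable def ak1mul (u v : AK1) : AK1 :=
  (u.1.sum (fun n c => v.1.sum fun m d => Finsupp.single (n + m) (c * d))
     + u.2.sum (fun p c => v.2.sum fun q d =>
         Finsupp.single (p + q + 1) (((p : ℚ) - (q : ℚ)) / 2 * (c * d))),
   (1/2 : ℚ) •
     (u.1.sum (fun n c => v.2.sum fun q d => Finsupp.single (n + q) (c * d))
       + v.1.sum (fun n c => u.2.sum fun q d => Finsupp.single (n + q) (c * d))))

namespace AddMonoidAlgebra

theorem coeff_eq_sum_sum {R G : Type*} [CommSemiring R]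
    (B : R[G] →ₗ[R] R[G] →ₗ[R] R[G]) {h : G → R → G → R → G →₀ R}
    (hB : ∀ p c q d, (B (single p c) (single q d)).coeff = h p c q d) (f g : R[G]) :
    (B f g).coeff = f.coeff.sum fun p c => g.coeff.sum fun q d => h p c q d := by
  conv_lhs => rw [← sum_coeff_single f, ← sum_coeff_single g]
  simp only [map_finsuppSum, LinearMap.finsupp_sum_apply, coeff_finsuppSum, hB]
  exact Finsupp.sum_comm _ _ _

theorem coeff_mul_eq_sum_sum {R G : Type*} [Semiring R] [Add G] (f g : R[G]) :
    (f * g).coeff =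
      f.coeff.sum fun n c => g.coeff.sum fun m d => Finsupp.single (n + m) (c * d) := by
  rw [mul_def, coeff_finsuppSum]
  simp only [coeff_finsuppSum, coeff_single]

section

variable {R G : Type*} [CommSemiring R] [AddCommMonoid G]

noncomputable def gradingLinearMap (φ : G →+ R) : R[G] →ₗ[R] R[G] :=
  (coeffLinearEquiv R).symm.toLinearMap ∘ₗ Finsupp.lsum R (fun g => φ g • Finsupp.lsingle g) ∘ₗ
      (coeffLinearEquiv R).toLinearMap

theorem gradingLinearMap_single (φ : G →+ R) (g : G) (r : R) :
    gradingLinearMap φ (single g r) = single g (φ g * r) := by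
  simp only [gradingLinearMap, LinearMap.coe_comp, Function.comp_apply, LinearEquiv.coe_coe,
    coeffLinearEquiv_apply, coeff_single, Finsupp.lsum_single, LinearMap.smul_apply,
    Finsupp.lsingle_apply, Finsupp.smul_single, smul_eq_mul]
  rfl

end

variable {R G : Type*} [CommRing R] [AddCommMonoid G]

noncomputable def gradingDerivation (φ : G →+ R) : Derivation R R[G] R[G] :=
  Derivation.mk' (gradingLinearMap φ) fun a b => by
    simp only [smul_eq_mul]
    induction a using induction_linear with
    | zero => simp
    | add a₁ a₂ h₁ h₂ => simp only [add_mul, map_add, h₁, h₂]; ring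
    | single g r =>
      induction b using induction_linear with
      | zero => simp
      | add b₁ b₂ h₁ h₂ => simp only [mul_add, map_add, h₁, h₂]; ring
      | single h s =>
        simp only [single_mul_single, gradingLinearMap_single, map_add]
        rw [add_comm h g, ← single_add]
        congr 1
        ring

theorem gradingDerivation_single (φ : G →+ R) (g : G) (r : R) :
    gradingDerivation φ (single g r) = single g (φ g * r) :=
  gradingLinearMap_single φ g r

end AddMonoidAlgebra

def IsLieAntialgebra {M : Type*} [AddCommGroup M] [Module ℚ M] (mul : M → M → M)
    (IsEven IsOdd : M → Prop) : Prop :=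
  (∀ u v, IsEven u → IsEven v → mul u v = mul v u) ∧
  (∀ u v, IsEven u → IsOdd v → mul u v = mul v u) ∧
  (∀ u v, IsOdd u → IsOdd v → mul u v = - mul v u) ∧
  (∀ u v, IsEven u → IsEven v → IsEven (mul u v)) ∧
  (∀ u v, IsEven u → IsOdd v → IsOdd (mul u v)) ∧
  (∀ u v, IsOdd u → IsOdd v → IsEven (mul u v)) ∧
  (∀ x y z, IsEven x → IsEven y → IsEven z → mul x (mul y z) = mul (mul x y) z) ∧
  (∀ x₁ x₂ y, IsEven x₁ → IsEven x₂ → IsOdd y →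
    mul x₁ (mul x₂ y) = (1/2 : ℚ) • mul (mul x₁ x₂) y) ∧
  (∀ x y₁ y₂, IsEven x → IsOdd y₁ → IsOdd y₂ →
    mul x (mul y₁ y₂) = mul (mul x y₁) y₂ + mul y₁ (mul x y₂)) ∧
  (∀ y₁ y₂ y₃, IsOdd y₁ → IsOdd y₂ → IsOdd y₃ →
    mul y₁ (mul y₂ y₃) + mul y₂ (mul y₃ y₁) + mul y₃ (mul y₁ y₂) = 0)

theorem IsLieAntialgebra.map {M N : Type*} [AddCommGroup M] [Module ℚ M] [AddCommGroup N]
    [Module ℚ N] {mulM : M → M → M} {IsEvenM IsOddM : M → Prop} {mulN : N → N → N}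
    {IsEvenN IsOddN : N → Prop} (h : IsLieAntialgebra mulM IsEvenM IsOddM) (e : M ≃ₗ[ℚ] N)
    (hmul : ∀ u v, mulN (e u) (e v) = e (mulM u v)) (heven : ∀ u, IsEvenN (e u) ↔ IsEvenM u)
    (hodd : ∀ u, IsOddN (e u) ↔ IsOddM u) : IsLieAntialgebra mulN IsEvenN IsOddN := by
  simp only [IsLieAntialgebra, e.surjective.forall, hmul, heven, hodd, ← map_add, ← map_neg,
    ← map_smul, e.injective.eq_iff, LinearEquiv.map_eq_zero_iff]
  exact h

section DerivationModel

variable {A : Type*} [CommRing A] [Algebra ℚ A] (D : Derivation ℚ A A) (s : A)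

noncomputable def oddBracket : A →ₗ[ℚ] A →ₗ[ℚ] A :=
  LinearMap.mk₂ ℚ (fun a b => (1/2 : ℚ) • (s * (D a * b - a * D b)))
    (by intros; simp only [map_add, Algebra.smul_def]; ring)
    (by intros; rw [D.map_smul]; simp only [Algebra.smul_def]; ring)
    (by intros; simp only [map_add, Algebra.smul_def]; ring)
    (by intros; rw [D.map_smul]; simp only [Algebra.smul_def]; ring)

theorem oddBracket_apply (a b : A) :
    oddBracket D s a b = (1/2 : ℚ) • (s * (D a * b - a * D b)) := rfl

theorem oddBracket_swap (a b : A) : oddBracket D s b a = -oddBracket D s a b := by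
  simp only [oddBracket_apply, ← smul_neg]
  ring_nf

theorem mul_oddBracket (f a b : A) :
    f * oddBracket D s a b =
      oddBracket D s ((1/2 : ℚ) • (f * a)) b + oddBracket D s a ((1/2 : ℚ) • (f * b)) := by
  have two_mul_half : (2 : A) * algebraMap ℚ A (1/2) = 1 := by
    rw [← map_ofNat (algebraMap ℚ A) 2, ← map_mul]; norm_num
  simp only [oddBracket_apply, Derivation.leibniz, smul_eq_mul, Algebra.smul_def]
  linear_combination (-f * s * (D a * b - a * D b) * algebraMap ℚ A (1/2)) * two_mul_half

theorem oddBracket_mul_add_cyclic (a b c : A) :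
    oddBracket D s b c * a + oddBracket D s c a * b + oddBracket D s a b * c = 0 := by
  simp only [oddBracket_apply, Algebra.smul_def]
  ring

noncomputable def derivationMul (u v : A × A) : A × A :=
  (u.1 * v.1 + oddBracket D s u.2 v.2, (1/2 : ℚ) • (u.1 * v.2 + v.1 * u.2))

@[simp]
theorem derivationMul_even_even (f g : A) : derivationMul D s (f, 0) (g, 0) = (f * g, 0) := by
  simp [derivationMul]

@[simp]
theorem derivationMul_even_odd (f b : A) :
    derivationMul D s (f, 0) (0, b) = (0, (1/2 : ℚ) • (f * b)) := by
  simp [derivationMul]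

@[simp]
theorem derivationMul_odd_even (a g : A) :
    derivationMul D s (0, a) (g, 0) = (0, (1/2 : ℚ) • (g * a)) := by
  simp [derivationMul]

@[simp]
theorem derivationMul_odd_odd (a b : A) :
    derivationMul D s (0, a) (0, b) = (oddBracket D s a b, 0) := by
  simp [derivationMul]

theorem isLieAntialgebra_derivationMul :
    IsLieAntialgebra (derivationMul D s) (fun u => u.2 = 0) (fun u => u.1 = 0) := by
  refine ⟨?_, ?_, ?_, ?_, ?_, ?_, ?_, ?_, ?_, ?_⟩
  · rintro ⟨f, _⟩ ⟨g, _⟩ rfl rfl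
    simp [mul_comm]
  · rintro ⟨f, _⟩ ⟨_, b⟩ rfl rfl
    simp
  · rintro ⟨_, a⟩ ⟨_, b⟩ rfl rfl
    simp [oddBracket_swap D s a b]
  · rintro ⟨f, _⟩ ⟨g, _⟩ rfl rfl
    simp
  · rintro ⟨f, _⟩ ⟨_, b⟩ rfl rfl
    simp
  · rintro ⟨_, a⟩ ⟨_, b⟩ rfl rfl
    simp
  · rintro ⟨f, _⟩ ⟨g, _⟩ ⟨h, _⟩ rfl rfl rfl
    simp [mul_assoc]
  · rintro ⟨f, _⟩ ⟨g, _⟩ ⟨_, b⟩ rfl rfl rfl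
    simp [smul_smul, mul_assoc]
  · rintro ⟨f, _⟩ ⟨_, a⟩ ⟨_, b⟩ rfl rfl rfl
    simp only [derivationMul_even_odd, derivationMul_odd_odd, derivationMul_even_even,
      Prod.mk_add_mk, add_zero, mul_oddBracket]
  · rintro ⟨_, a⟩ ⟨_, b⟩ ⟨_, c⟩ rfl rfl rfl
    simp [← smul_add, oddBracket_mul_add_cyclic]

end DerivationModel

open AddMonoidAlgebra

/-- `t d/dt` on `ℚ[ℤ] = ℚ[t, t⁻¹]`. -/
noncomputable abbrev eulerDerivation : Derivation ℚ ℚ[ℤ] ℚ[ℤ] :=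
  gradingDerivation (Int.castAddHom ℚ)

theorem coeff_oddBracket_eq_sum_sum (a b : ℚ[ℤ]) :
    (oddBracket eulerDerivation (single 1 1) a b).coeff =
      a.coeff.sum fun p c => b.coeff.sum fun q d =>
        Finsupp.single (p + q + 1) (((p : ℚ) - q) / 2 * (c * d)) :=
  coeff_eq_sum_sum _ (fun p c q d => by
    simp only [oddBracket_apply, gradingDerivation_single, single_mul_single, ← single_sub,
      smul_single, coeff_single, Int.coe_castAddHom, smul_eq_mul]
    congr 1 <;> ring) a b

noncomputable def ak1Equiv : (ℚ[ℤ] × ℚ[ℤ]) ≃ₗ[ℚ] AK1 :=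
  (coeffLinearEquiv ℚ).prodCongr (coeffLinearEquiv ℚ)

theorem ak1mul_ak1Equiv (u v : ℚ[ℤ] × ℚ[ℤ]) :
    ak1mul (ak1Equiv u) (ak1Equiv v) =
      ak1Equiv (derivationMul eulerDerivation (single 1 1) u v) := by
  simp only [ak1mul, ak1Equiv, LinearEquiv.prodCongr_apply, coeffLinearEquiv_apply,
    ← coeff_mul_eq_sum_sum, ← coeff_oddBracket_eq_sum_sum, derivationMul]
  rfl

/-- The conformal Lie antialgebra `AK(1)` is a Lie antialgebra: with even
part `{u | u.2 = 0}` and odd part `{u | u.1 = 0}`, its product satisfies supercommutativity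
and the axioms (LA0)–(LA3). -/
theorem ak1_is_lie_antialgebra :
    -- supercommutativity
    (∀ u v : AK1, u.2 = 0 → v.2 = 0 → ak1mul u v = ak1mul v u) ∧
    (∀ u v : AK1, u.2 = 0 → v.1 = 0 → ak1mul u v = ak1mul v u) ∧
    (∀ u v : AK1, u.1 = 0 → v.1 = 0 → ak1mul u v = - ak1mul v u) ∧
    -- grading
    (∀ u v : AK1, u.2 = 0 → v.2 = 0 → (ak1mul u v).2 = 0) ∧
    (∀ u v : AK1, u.2 = 0 → v.1 = 0 → (ak1mul u v).1 = 0) ∧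
    (∀ u v : AK1, u.1 = 0 → v.1 = 0 → (ak1mul u v).2 = 0) ∧
    -- (LA0) associativity of the even part
    (∀ x y z : AK1, x.2 = 0 → y.2 = 0 → z.2 = 0 →
      ak1mul x (ak1mul y z) = ak1mul (ak1mul x y) z) ∧
    -- (LA1) half-action
    (∀ x1 x2 y : AK1, x1.2 = 0 → x2.2 = 0 → y.1 = 0 →
      ak1mul x1 (ak1mul x2 y) = (1/2 : ℚ) • ak1mul (ak1mul x1 x2) y) ∧
    -- (LA2) Leibniz identity
    (∀ x y1 y2 : AK1, x.2 = 0 → y1.1 = 0 → y2.1 = 0 →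
      ak1mul x (ak1mul y1 y2) = ak1mul (ak1mul x y1) y2 + ak1mul y1 (ak1mul x y2)) ∧
    -- (LA3) odd Jacobi identity
    (∀ y1 y2 y3 : AK1, y1.1 = 0 → y2.1 = 0 → y3.1 = 0 →
      ak1mul y1 (ak1mul y2 y3) + ak1mul y2 (ak1mul y3 y1)
        + ak1mul y3 (ak1mul y1 y2) = 0) :=
  (isLieAntialgebra_derivationMul eulerDerivation (single 1 1)).map
    ak1Equiv ak1mul_ak1Equiv (fun u => by simp [ak1Equiv]) (fun u => by simp [ak1Equiv])
end

section
/- The set of monomials {E A^k B^l : k,l ∈ ℕ} ∪ {A^k B^l : k,l ∈ ℕ} spans the universal enveloping algebra U(K₃) as a vector space. -/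
/-! The span `S` of the monomials contains `1` and is stable under left multiplication by each
generator; since the generators generate the algebra, `S` is everything. Stability comes from
rewriting `E * E = E`, `A * E = A - E * A`, `B * E = B - E * B` and `B * A = A * B - E`; the last
one lets `B` pass through `A ^ k` by induction on `k`. -/

open Submodule

theorem Submodule.mul_mem_span_of_forall_mul_mem {K R : Type*} [CommSemiring K] [Semiring R]
    [Algebra K R] {s : Set R} {a : R} (h : ∀ x ∈ s, a * x ∈ span K s) {y : R}
    (hy : y ∈ span K s) : a * y ∈ span K s := by
  induction hy using span_induction with
  | mem x hx => exact h x hx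
  | zero => simp
  | add x y _ _ hx hy => rw [mul_add]; exact add_mem hx hy
  | smul c x _ hx => rw [mul_smul_comm]; exact smul_mem _ c hx

theorem Algebra.adjoin_le_of_mul_mem {K R : Type*} [CommSemiring K] [Semiring R] [Algebra K R]
    {s : Set R} {M : Submodule K R} (one_mem : 1 ∈ M) (h : ∀ a ∈ s, ∀ m ∈ M, a * m ∈ M) :
    Subalgebra.toSubmodule (Algebra.adjoin K s) ≤ M := by
  intro x hx
  suffices ∀ m ∈ M, x * m ∈ M by simpa using this 1 one_mem
  induction hx using Algebra.adjoin_induction with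
  | mem a ha => exact h a ha
  | algebraMap c =>
    intro m hm
    rw [Algebra.algebraMap_eq_smul_one, smul_mul_assoc, one_mul]
    exact smul_mem _ c hm
  | add y z _ _ hy hz => intro m hm; rw [add_mul]; exact add_mem (hy m hm) (hz m hm)
  | mul y z _ _ hy hz => intro m hm; rw [mul_assoc]; exact hy _ (hz m hm)

namespace UK3

variable (K : Type*) {R : Type*} [CommRing K] [Ring R] [Algebra K R] {A B E : R}

def monomials (A B E : R) : Set R :=
  {x | ∃ k l : ℕ, x = E * A ^ k * B ^ l} ∪ {x | ∃ k l : ℕ, x = A ^ k * B ^ l}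

theorem E_mul_A_pow_mul_B_pow_mem (k l : ℕ) : E * A ^ k * B ^ l ∈ span K (monomials A B E) :=
  subset_span (Or.inl ⟨k, l, rfl⟩)

theorem A_pow_mul_B_pow_mem (k l : ℕ) : A ^ k * B ^ l ∈ span K (monomials A B E) :=
  subset_span (Or.inr ⟨k, l, rfl⟩)

theorem one_mem_span_monomials : (1 : R) ∈ span K (monomials A B E) := by
  simpa using A_pow_mul_B_pow_mem K (A := A) (B := B) (E := E) 0 0

theorem E_mul_mem (hEE : E * E = E) {x : R} (hx : x ∈ span K (monomials A B E)) :
    E * x ∈ span K (monomials A B E) := by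
  refine mul_mem_span_of_forall_mul_mem ?_ hx
  rintro _ (⟨k, l, rfl⟩ | ⟨k, l, rfl⟩)
  · rw [← mul_assoc, ← mul_assoc, hEE]
    exact E_mul_A_pow_mul_B_pow_mem K k l
  · rw [← mul_assoc]
    exact E_mul_A_pow_mul_B_pow_mem K k l

theorem A_mul_mem (hAE : A * E + E * A = A) {x : R} (hx : x ∈ span K (monomials A B E)) :
    A * x ∈ span K (monomials A B E) := by
  refine mul_mem_span_of_forall_mul_mem ?_ hx
  rintro _ (⟨k, l, rfl⟩ | ⟨k, l, rfl⟩)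
  · have : A * (E * A ^ k * B ^ l) = A ^ (k + 1) * B ^ l - E * A ^ (k + 1) * B ^ l := by
      rw [← mul_assoc, ← mul_assoc, eq_sub_of_add_eq hAE, pow_succ']
      noncomm_ring
    rw [this]
    exact sub_mem (A_pow_mul_B_pow_mem K _ l) (E_mul_A_pow_mul_B_pow_mem K _ l)
  · rw [← mul_assoc, ← pow_succ']
    exact A_pow_mul_B_pow_mem K _ l

theorem B_mul_A_pow_mul_B_pow_mem (hAB : A * B - B * A = E) (hAE : A * E + E * A = A)
    (k l : ℕ) : B * (A ^ k * B ^ l) ∈ span K (monomials A B E) := by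
  induction k with
  | zero => simpa [← pow_succ'] using A_pow_mul_B_pow_mem K 0 (l + 1)
  | succ k ih =>
    have : B * (A ^ (k + 1) * B ^ l) = A * (B * (A ^ k * B ^ l)) - E * A ^ k * B ^ l := by
      rw [pow_succ', ← hAB]
      noncomm_ring
    rw [this]
    exact sub_mem (A_mul_mem K hAE ih) (E_mul_A_pow_mul_B_pow_mem K k l)

theorem B_mul_mem (hAB : A * B - B * A = E) (hAE : A * E + E * A = A)
    (hBE : B * E + E * B = B) (hEE : E * E = E) {x : R} (hx : x ∈ span K (monomials A B E)) :
    B * x ∈ span K (monomials A B E) := by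
  refine mul_mem_span_of_forall_mul_mem ?_ hx
  rintro _ (⟨k, l, rfl⟩ | ⟨k, l, rfl⟩)
  · have hB := B_mul_A_pow_mul_B_pow_mem K hAB hAE k l
    have : B * (E * A ^ k * B ^ l) = B * (A ^ k * B ^ l) - E * (B * (A ^ k * B ^ l)) := by
      rw [← mul_assoc, ← mul_assoc, eq_sub_of_add_eq hBE]
      noncomm_ring
    rw [this]
    exact sub_mem hB (E_mul_mem K hEE hB)
  · exact B_mul_A_pow_mul_B_pow_mem K hAB hAE k l

end UK3

open UK3

/-- The monomials `{E A^k B^l}` and `{A^k B^l}` (`k, l ∈ ℕ`) span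
`U(K₃)` as a vector space: in any associative unital algebra generated by `A, B, E`
subject to the relations `AB − BA = E`, `AE + EA = A`, `BE + EB = B`, `E² = E`
(in particular in `U(K₃)`), these monomials span the whole algebra. -/
theorem uK3_monomials_span
    {R : Type*} [Ring R] [Algebra ℚ R] (A B E : R)
    (h1 : A * B - B * A = E)
    (h2 : A * E + E * A = A)
    (h3 : B * E + E * B = B)
    (h4 : E * E = E)
    (hgen : Algebra.adjoin ℚ {A, B, E} = ⊤) :
    Submodule.span ℚ
      ({x : R | ∃ k l : ℕ, x = E * A ^ k * B ^ l} ∪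
       {x : R | ∃ k l : ℕ, x = A ^ k * B ^ l}) = ⊤ := by
  change span ℚ (monomials A B E) = ⊤
  have generators_mul_mem : ∀ a ∈ ({A, B, E} : Set R), ∀ m ∈ span ℚ (monomials A B E),
      a * m ∈ span ℚ (monomials A B E) := by
    rintro _ (rfl | rfl | rfl) m hm
    · exact A_mul_mem ℚ h2 hm
    · exact B_mul_mem ℚ h1 h2 h3 h4 hm
    · exact E_mul_mem ℚ h4 hm
  rw [eq_top_iff, ← Algebra.toSubmodule_eq_top.2 hgen]
  exact Algebra.adjoin_le_of_mul_mem (one_mem_span_monomials ℚ) generators_mul_mem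
end

section
/- In U(K₃), the Jordan superproduct [x,y]₊ = ½(xy + (−1)^{x̄ȳ}yx) does not satisfy the half-action axiom (LA1): with X = EAB (even), Y = EB² (even), Z = EB (odd), one has [X,[Y,Z]₊]₊ = ¼EAB⁴ while [[X,Y]₊,Z]₊ = ½EAB⁴ − ¼EB³, so [X,[Y,Z]₊]₊ ≠ ½[[X,Y]₊,Z]₊. -/
open FreeAlgebra

/-- Generators of `U(K₃)`: `0 ↦ A`, `1 ↦ B`, `2 ↦ E`. -/
noncomputable def k3gen (i : Fin 3) : FreeAlgebra ℚ (Fin 3) := FreeAlgebra.ι ℚ i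

/-- Defining relations of the universal enveloping algebra `U(K₃)`:
`AB − BA = E`, `AE + EA = A`, `BE + EB = B`, `E² = E`. -/
inductive K3Rel : FreeAlgebra ℚ (Fin 3) → FreeAlgebra ℚ (Fin 3) → Prop
  | r1 : K3Rel (k3gen 0 * k3gen 1 - k3gen 1 * k3gen 0) (k3gen 2)
  | r2 : K3Rel (k3gen 0 * k3gen 2 + k3gen 2 * k3gen 0) (k3gen 0)
  | r3 : K3Rel (k3gen 1 * k3gen 2 + k3gen 2 * k3gen 1) (k3gen 1)
  | r4 : K3Rel (k3gen 2 * k3gen 2) (k3gen 2)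

/-- The universal enveloping algebra `U(K₃)`. -/
abbrev UK3 : Type := RingQuot K3Rel

/-- The generator `A` (odd) of `U(K₃)`. -/
noncomputable def uA : UK3 := RingQuot.mkAlgHom ℚ K3Rel (k3gen 0)
/-- The generator `B` (odd) of `U(K₃)`. -/
noncomputable def uB : UK3 := RingQuot.mkAlgHom ℚ K3Rel (k3gen 1)
/-- The generator `E` (even) of `U(K₃)`. -/
noncomputable def uE : UK3 := RingQuot.mkAlgHom ℚ K3Rel (k3gen 2)

/-! Relative to the idempotent `E`, the odd generators lie in the Peirce `½`-space
(`xE + Ex = x`), so even monomials `u` commute with `E` while odd ones satisfy `EuE = 0`.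
Hence a product `(Eu)(Ev)` of the monomials involved is `Euv` or `0`, except `EB²·EAB`,
where `BA = AB − E` contributes `−EB²`; this gives both values. They violate (LA1) because
`EB³ ≠ 0`, as a representation on `ℚ[X] × ℚ[X]` shows. -/

/-- `x` lies in the Peirce `½`-space of `e` for the Jordan product `x ∘ y = ½(xy + yx)`. -/
def PeirceHalf {R : Type*} [Ring R] (e x : R) : Prop := x * e + e * x = x

namespace PeirceHalf

variable {R : Type*} [Ring R] {e x y : R}

theorem commute_mul (hx : PeirceHalf e x) (hy : PeirceHalf e y) : Commute e (x * y) := by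
  unfold PeirceHalf at hx hy
  calc e * (x * y) = (x * e + e * x) * y - x * (e * y) := by noncomm_ring
    _ = x * (y * e + e * y) - x * (e * y) := by rw [hx, hy]
    _ = x * y * e := by noncomm_ring

theorem mul_of_commute (hx : PeirceHalf e x) (hy : Commute e y) : PeirceHalf e (x * y) := by
  unfold PeirceHalf at hx ⊢
  calc x * y * e + e * (x * y) = (x * e + e * x) * y := by rw [mul_assoc, ← hy.eq]; noncomm_ring
    _ = x * y := by rw [hx]

theorem idem_mul_mul_idem (he : IsIdempotentElem e) (hx : PeirceHalf e x) : e * x * e = 0 := by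
  unfold PeirceHalf at hx
  calc e * x * e = e * (x * e + e * x) - (e * e) * x := by noncomm_ring
    _ = 0 := by rw [hx, he.eq, sub_self]

theorem idem_mul_mul_idem_mul (he : IsIdempotentElem e) (hx : PeirceHalf e x) (v : R) :
    e * x * (e * v) = 0 := by
  rw [← mul_assoc, hx.idem_mul_mul_idem he, zero_mul]

end PeirceHalf

theorem Commute.idem_mul_mul_idem_mul {R : Type*} [Semigroup R] {e u : R}
    (he : IsIdempotentElem e) (hu : Commute e u) (v : R) : e * u * (e * v) = e * u * v := by
  rw [← mul_assoc, mul_assoc e, ← hu.eq, ← mul_assoc, he.eq]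

/-- The Jordan superproduct `[x, y]₊` whenever one of `x`, `y` is even. -/
noncomputable def jordanProd {R : Type*} [Ring R] [Algebra ℚ R] (x y : R) : R :=
  (1/2 : ℚ) • (x * y + y * x)

section Jordan

variable {R : Type*} [Ring R] [Algebra ℚ R]

theorem jordanProd_smul_right (x y : R) (c : ℚ) :
    jordanProd x (c • y) = c • jordanProd x y := by
  simp only [jordanProd, mul_smul_comm, smul_mul_assoc, ← smul_add, smul_comm c]

theorem jordanProd_sub_left (x y z : R) :
    jordanProd (x - y) z = jordanProd x z - jordanProd y z := by
  simp only [jordanProd, sub_mul, mul_sub, ← smul_sub]; congr 1; abel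

theorem jordanProd_smul_left (x y : R) (c : ℚ) :
    jordanProd (c • x) y = c • jordanProd x y := by
  simp only [jordanProd, mul_smul_comm, smul_mul_assoc, ← smul_add, smul_comm c]

theorem jordanProd_idem_mul_idem_mul {e u v : R} (he : IsIdempotentElem e) (hu : Commute e u)
    (hv : PeirceHalf e v) : jordanProd (e * u) (e * v) = (1/2 : ℚ) • (e * u * v) := by
  rw [jordanProd, hu.idem_mul_mul_idem_mul he, hv.idem_mul_mul_idem_mul he, add_zero]

end Jordan

structure IsK3Triple {R : Type*} [Ring R] (a b e : R) : Prop where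
  comm : a * b - b * a = e
  peirceHalf_left : PeirceHalf e a
  peirceHalf_right : PeirceHalf e b
  idem : IsIdempotentElem e

namespace IsK3Triple

variable {R : Type*} [Ring R] {a b e : R} (h : IsK3Triple a b e)
include h

theorem commute_mul_self : Commute e (b * b) :=
  h.peirceHalf_right.commute_mul h.peirceHalf_right

theorem peirceHalf_pow_three : PeirceHalf e (b ^ 3) := by
  rw [pow_succ', sq]; exact h.peirceHalf_right.mul_of_commute h.commute_mul_self

theorem commute_mul : Commute e (a * b) := h.peirceHalf_left.commute_mul h.peirceHalf_right

theorem commute_mul_pow_three : Commute e (a * b ^ 3) :=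
  h.peirceHalf_left.commute_mul h.peirceHalf_pow_three

variable [Algebra ℚ R]

theorem jordanProd_eb2_eb : jordanProd (e * b * b) (e * b) = (1/2 : ℚ) • (e * b ^ 3) := by
  rw [mul_assoc e b b, jordanProd_idem_mul_idem_mul h.idem h.commute_mul_self h.peirceHalf_right]
  noncomm_ring

theorem jordanProd_eab_eb3 :
    jordanProd (e * a * b) (e * b ^ 3) = (1/2 : ℚ) • (e * a * b ^ 4) := by
  rw [mul_assoc e a b, jordanProd_idem_mul_idem_mul h.idem h.commute_mul h.peirceHalf_pow_three]
  noncomm_ring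

theorem jordanProd_eab3_eb :
    jordanProd (e * a * b ^ 3) (e * b) = (1/2 : ℚ) • (e * a * b ^ 4) := by
  rw [mul_assoc e a, jordanProd_idem_mul_idem_mul h.idem h.commute_mul_pow_three h.peirceHalf_right]
  noncomm_ring

theorem jordanProd_eab_eb2 :
    jordanProd (e * a * b) (e * b * b) = e * a * b ^ 3 - (1/2 : ℚ) • (e * b * b) := by
  have hba : b * a = a * b - e := by rw [← h.comm]; abel
  have hXY : e * a * b * (e * b * b) = e * a * b ^ 3 := by
    rw [mul_assoc e a b, mul_assoc e b b, h.commute_mul.idem_mul_mul_idem_mul h.idem]; noncomm_ring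
  have hYX : e * b * b * (e * a * b) = e * a * b ^ 3 - e * b * b := by
    calc e * b * b * (e * a * b) = e * (b * b) * (e * (a * b)) := by noncomm_ring
      _ = e * (b * (b * a) * b) := by
        rw [h.commute_mul_self.idem_mul_mul_idem_mul h.idem]; noncomm_ring
      _ = e * (b * (a * b - e) * b) := by rw [hba]
      _ = e * (b * a) * (b * b) - e * b * (e * b) := by noncomm_ring
      _ = (e * a * b - e * e) * (b * b) := by
        rw [hba, h.peirceHalf_right.idem_mul_mul_idem_mul h.idem]; noncomm_ring
      _ = e * a * b ^ 3 - e * b * b := by rw [h.idem.eq]; noncomm_ring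
  rw [jordanProd, hXY, hYX]
  module

theorem jordanProd_jordanProd_right :
    jordanProd (e * a * b) (jordanProd (e * b * b) (e * b)) = (1/4 : ℚ) • (e * a * b ^ 4) := by
  rw [h.jordanProd_eb2_eb, jordanProd_smul_right, h.jordanProd_eab_eb3, smul_smul]
  norm_num

theorem jordanProd_jordanProd_left :
    jordanProd (jordanProd (e * a * b) (e * b * b)) (e * b)
      = (1/2 : ℚ) • (e * a * b ^ 4) - (1/4 : ℚ) • (e * b ^ 3) := by
  rw [h.jordanProd_eab_eb2, jordanProd_sub_left, jordanProd_smul_left, h.jordanProd_eab3_eb,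
    h.jordanProd_eb2_eb, smul_smul]
  norm_num

end IsK3Triple

theorem isK3Triple_uA_uB_uE : IsK3Triple uA uB uE := by
  refine ⟨?_, ?_, ?_, ?_⟩
  · simpa only [uA, uB, uE, map_mul, map_sub] using RingQuot.mkAlgHom_rel ℚ K3Rel.r1
  · simpa only [PeirceHalf, uA, uE, map_mul, map_add] using RingQuot.mkAlgHom_rel ℚ K3Rel.r2
  · simpa only [PeirceHalf, uB, uE, map_mul, map_add] using RingQuot.mkAlgHom_rel ℚ K3Rel.r3
  · simpa only [IsIdempotentElem, uE, map_mul] using RingQuot.mkAlgHom_rel ℚ K3Rel.r4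

namespace UK3

variable {R : Type*} [Ring R] [Algebra ℚ R] {a b e : R}

noncomputable def lift (h : IsK3Triple a b e) : UK3 →ₐ[ℚ] R :=
  RingQuot.liftAlgHom ℚ ⟨FreeAlgebra.lift ℚ ![a, b, e], fun _ _ r => by
    cases r
    · simpa [k3gen] using h.comm
    · simpa [k3gen, PeirceHalf] using h.peirceHalf_left
    · simpa [k3gen, PeirceHalf] using h.peirceHalf_right
    · simpa [k3gen] using h.idem.eq⟩

theorem lift_uB (h : IsK3Triple a b e) : lift h uB = b := by
  simp [lift, uB, k3gen]

theorem lift_uE (h : IsK3Triple a b e) : lift h uE = e := by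
  simp [lift, uE, k3gen]

end UK3

/-! `U(K₃)` acts on `ℚ[X] × ℚ[X]` by `A(p, q) = (q', X p')`, `B(p, q) = (q, X p)`,
`E(p, q) = (p, 0)`. No finite-dimensional representation can detect `E`: there
`tr E = tr (AB − BA) = 0`, forcing the idempotent `E` to vanish. -/

namespace PolyPair

open Polynomial

noncomputable def opA : Module.End ℚ (ℚ[X] × ℚ[X]) :=
  (derivative.comp (LinearMap.snd ℚ _ _)).prod
    ((LinearMap.mulLeft ℚ X).comp (derivative.comp (LinearMap.fst ℚ _ _)))

noncomputable def opB : Module.End ℚ (ℚ[X] × ℚ[X]) :=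
  (LinearMap.snd ℚ _ _).prod ((LinearMap.mulLeft ℚ X).comp (LinearMap.fst ℚ _ _))

noncomputable def opE : Module.End ℚ (ℚ[X] × ℚ[X]) := (LinearMap.fst ℚ _ _).prod 0

@[simp] theorem opA_apply (p q : ℚ[X]) : opA (p, q) = (derivative q, X * derivative p) := rfl
@[simp] theorem opB_apply (p q : ℚ[X]) : opB (p, q) = (q, X * p) := rfl
@[simp] theorem opE_apply (p q : ℚ[X]) : opE (p, q) = (p, 0) := rfl

theorem isK3Triple : IsK3Triple opA opB opE := by
  refine ⟨?_, ?_, ?_, ?_⟩ <;> refine LinearMap.ext fun ⟨p, q⟩ => ?_ <;>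
    simp [Module.End.mul_apply, derivative_mul]

theorem opE_mul_opB_pow_three_ne_zero : opE * opB ^ 3 ≠ 0 := by
  intro h
  have h01 : (opE * opB ^ 3) (0, 1) = (X, 0) := by simp [pow_succ, Module.End.mul_apply]
  rw [h, LinearMap.zero_apply, eq_comm, Prod.mk_eq_zero] at h01
  exact X_ne_zero h01.1

end PolyPair

theorem uE_mul_uB_pow_three_ne_zero : uE * uB ^ 3 ≠ 0 := fun h =>
  PolyPair.opE_mul_opB_pow_three_ne_zero <| by
    simpa [UK3.lift_uE, UK3.lift_uB] using congrArg (UK3.lift PolyPair.isK3Triple) h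

/-- In `U(K₃)` the Jordan superproduct `[x,y]₊ = ½(xy + (−1)^{x̄ȳ}yx)`
fails the half-action axiom (LA1): with `X = EAB` (even), `Y = EB²` (even), `Z = EB`
(odd), all the relevant superproducts are `½(xy + yx)` and one has
`[X,[Y,Z]₊]₊ = ¼EAB⁴` while `[[X,Y]₊,Z]₊ = ½EAB⁴ − ¼EB³`, so that
`[X,[Y,Z]₊]₊ ≠ ½[[X,Y]₊,Z]₊`. -/
theorem uK3_jordan_product_fails_LA1 :
    ∀ X Y Z : UK3, X = uE * uA * uB → Y = uE * uB * uB → Z = uE * uB →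
      (1/2 : ℚ) • (X * ((1/2 : ℚ) • (Y * Z + Z * Y))
          + ((1/2 : ℚ) • (Y * Z + Z * Y)) * X)
        = (1/4 : ℚ) • (uE * uA * uB ^ 4) ∧
      (1/2 : ℚ) • (((1/2 : ℚ) • (X * Y + Y * X)) * Z
          + Z * ((1/2 : ℚ) • (X * Y + Y * X)))
        = (1/2 : ℚ) • (uE * uA * uB ^ 4) - (1/4 : ℚ) • (uE * uB ^ 3) ∧
      (1/2 : ℚ) • (X * ((1/2 : ℚ) • (Y * Z + Z * Y))
          + ((1/2 : ℚ) • (Y * Z + Z * Y)) * X)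
        ≠ (1/2 : ℚ) • ((1/2 : ℚ) • (((1/2 : ℚ) • (X * Y + Y * X)) * Z
          + Z * ((1/2 : ℚ) • (X * Y + Y * X)))) := by
  rintro X Y Z rfl rfl rfl
  have right := isK3Triple_uA_uB_uE.jordanProd_jordanProd_right
  have left := isK3Triple_uA_uB_uE.jordanProd_jordanProd_left
  refine ⟨right, left, fun heq => uE_mul_uB_pow_three_ne_zero ?_⟩
  change jordanProd _ (jordanProd _ _) = (1/2 : ℚ) • jordanProd (jordanProd _ _) _ at heq
  rw [right, left] at heq
  linear_combination (norm := module) (8 : ℚ) • heq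
end

section
/- In the universal enveloping algebra U(AK(1)), the anticommutator A_iA_j + A_jA_i depends only on i + j: for all half-integers i, j, k, l with i + j = k + l, one has A_iA_j + A_jA_i = A_kA_l + A_lA_k. -/
/-!
Since `E₁` commutes with every `E_n`, it commutes with every commutator `[Aᵢ, Aⱼ] = (j − i)E_{i+j}`.
Writing `A_{i+1} = E₁Aᵢ + AᵢE₁`, the anticommutators `{A_{i+1}, Aⱼ}` and `{Aᵢ, A_{j+1}}` differ by
`[E₁, [Aᵢ, Aⱼ]] = 0`, so moving one unit of index from one factor to the other does not change the
anticommutator; iterating, it depends only on `i + j`.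
-/

theorem eq_of_add_eq_add_of_shift_invariant {α : Type*} (f : ℤ → ℤ → α)
    (hf : ∀ p q, f (p + 1) q = f p (q + 1)) {p q r s : ℤ} (h : p + q = r + s) :
    f p q = f r s := by
  have collapse : ∀ q p, f p q = f (p + q) 0 := by
    intro q
    induction q using Int.induction_on with
    | zero => simp
    | succ q ih =>
      intro p
      rw [← hf, ih]
      ring_nf
    | pred q ih =>
      intro p
      have := hf (p - 1) (-(q : ℤ) - 1)
      rw [sub_add_cancel, show -(q : ℤ) - 1 + 1 = -q by ring] at this
      rw [this, ih]
      ring_nf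
  rw [collapse q, collapse s, h]

theorem anticomm_shift_of_commute_lie {R : Type*} [Ring R] {e a b : R} (h : Commute e ⁅a, b⁆) :
    (e * a + a * e) * b + b * (e * a + a * e) = a * (e * b + b * e) + (e * b + b * e) * a := by
  have h' := h.eq
  rw [Ring.lie_def] at h'
  linear_combination (norm := noncomm_ring) h'

section

variable {R : Type*} [Ring R] (E A : ℤ → R)

theorem commute_lie_of_lie_eq_smul {S : Type*} [SMul S R] [SMulCommClass S R R]
    [IsScalarTower S R R] (c : ℤ → ℤ → S) (hEE : ∀ n m : ℤ, E n * E m = E (n + m))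
    (hAA : ∀ p q : ℤ, ⁅A p, A q⁆ = c p q • E (p + q + 1)) (n p q : ℤ) :
    Commute (E n) ⁅A p, A q⁆ := by
  rw [hAA]
  refine Commute.smul_right ?_ _
  rw [Commute, SemiconjBy, hEE, hEE, add_comm]

theorem anticomm_succ_left_eq_succ_right (hEA : ∀ n p : ℤ, E n * A p + A p * E n = A (n + p))
    (hcomm : ∀ p q : ℤ, Commute (E 1) ⁅A p, A q⁆) (p q : ℤ) :
    A (p + 1) * A q + A q * A (p + 1) = A p * A (q + 1) + A (q + 1) * A p := by
  rw [add_comm p, add_comm q, ← hEA, ← hEA]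
  exact anticomm_shift_of_commute_lie (hcomm p q)

end

-- `A p` stands for `A_{p+½}`: half-integer indices are encoded by their integer part.
/-- In `U(AK(1))` (any associative algebra over a field of
characteristic 0 with elements `E n` (`n ∈ ℤ`) and `A p` — where `A p` stands for
`A_{p+½}`, encoding the half-integer index `i = p + ½` by the integer `p` — satisfying
`EₙEₘ = E_{n+m}`, `EₙAᵢ + AᵢEₙ = A_{n+i}` and `AᵢAⱼ − AⱼAᵢ = (j−i)E_{i+j}`),
the anticommutator `AᵢAⱼ + AⱼAᵢ` depends only on `i + j`: if `i + j = k + l` then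
`AᵢAⱼ + AⱼAᵢ = A_kA_l + A_lA_k`. -/
theorem uAK1_anticommutator_depends_only_on_sum
    {R : Type*} [Ring R] [Algebra ℚ R] (E : ℤ → R) (A : ℤ → R)
    (hEE : ∀ n m : ℤ, E n * E m = E (n + m))
    (hEA : ∀ n p : ℤ, E n * A p + A p * E n = A (n + p))
    (hAA : ∀ p q : ℤ, A p * A q - A q * A p = ((q - p : ℤ) : ℚ) • E (p + q + 1)) :
    ∀ p q r s : ℤ, p + q = r + s →
      A p * A q + A q * A p = A r * A s + A s * A r := by
  have hcomm : ∀ p q : ℤ, Commute (E 1) ⁅A p, A q⁆ :=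
    commute_lie_of_lie_eq_smul E A (fun p q => ((q - p : ℤ) : ℚ)) hEE hAA 1
  intro p q r s h
  exact eq_of_add_eq_add_of_shift_invariant (fun p q => A p * A q + A q * A p)
    (anticomm_succ_left_eq_succ_right E A hEA hcomm) h
end

section
/- In U(AK(1)), defining X_n := ½(A_{n−i}A_i + A_iA_{n−i}) for any half-integer i (well-defined, independent of i), the elements X_n and A_i satisfy the commutation relation X_nA_i − A_iX_n = (i − n/2)A_{n+i} of the conformal Lie superalgebra K(1). -/
/-!
Both claims reduce to identities in an arbitrary ring. Independence of `i`: by the `EA`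
relation, shifting `i` by `m` replaces each factor `A_j` of the anticommutator by
`E_m A_j + A_j E_m`, and the two ways of doing so differ by `[E_m, [A_j, A_k]]`, which
vanishes because `[A_j, A_k]` is a multiple of an `E` and the `E`'s commute. The `K(1)`
relation: `[ab + ba, x] = a[b, x] + [a, x]b + b[a, x] + [b, x]a`, and each commutator with
`A_i` is a multiple of an `E`, whose anticommutator with the remaining `A` is again an `A`.
-/

section RingIdentities

variable {R : Type*} [Ring R]

theorem anticomm_anticomm_left_eq_of_commute {b c e : R} (h : Commute e (c * b - b * c)) :
    (e * c + c * e) * b + b * (e * c + c * e) = c * (e * b + b * e) + (e * b + b * e) * c := by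
  have h' : e * (c * b - b * c) = (c * b - b * c) * e := h
  linear_combination (norm := noncomm_ring) h'

theorem anticomm_mul_sub_mul_anticomm (a b x : R) :
    (a * b + b * a) * x - x * (a * b + b * a)
      = a * (b * x - x * b) + (a * x - x * a) * b + b * (a * x - x * a) + (b * x - x * b) * a := by
  noncomm_ring

theorem anticomm_mul_sub_mul_anticomm_eq_smul {S : Type*} [CommSemiring S] [Algebra S R]
    {a b x e f y : R} {α β : S} (hb : b * x - x * b = α • e) (ha : a * x - x * a = β • f)
    (he : e * a + a * e = y) (hf : f * b + b * f = y) :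
    (a * b + b * a) * x - x * (a * b + b * a) = (α + β) • y := by
  have hy : (α + β) • y = α • (e * a + a * e) + β • (f * b + b * f) := by
    rw [he, hf, add_smul]
  rw [anticomm_mul_sub_mul_anticomm, hb, ha, hy, mul_smul_comm, mul_smul_comm, smul_mul_assoc,
    smul_mul_assoc, smul_add, smul_add]
  abel

end RingIdentities

/-- `A p` encodes `A_{p+½}`: with `i = p + ½`, `A (n - 1 - p)` is `A_{n-i}`, and the coefficient
`(2q + 1 - n)/2` is `i - n/2` for `i = q + ½`. -/
theorem uAK1_even_part_K1_relation
    {R : Type*} [Ring R] [Algebra ℚ R] (E : ℤ → R) (A : ℤ → R)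
    (hEE : ∀ n m : ℤ, E n * E m = E (n + m))
    (hEA : ∀ n p : ℤ, E n * A p + A p * E n = A (n + p))
    (hAA : ∀ p q : ℤ, A p * A q - A q * A p = ((q - p : ℤ) : ℚ) • E (p + q + 1)) :
    ∀ n p q : ℤ,
      (1/2 : ℚ) • (A (n - 1 - p) * A p + A p * A (n - 1 - p))
        = (1/2 : ℚ) • (A (n - 1 - q) * A q + A q * A (n - 1 - q)) ∧
      ((1/2 : ℚ) • (A (n - 1 - p) * A p + A p * A (n - 1 - p))) * A q
          - A q * ((1/2 : ℚ) • (A (n - 1 - p) * A p + A p * A (n - 1 - p)))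
        = (((2 * q + 1 - n : ℤ) : ℚ) / 2) • A (n + q) := by
  have hEA' : ∀ m j k, m + j = k → E m * A j + A j * E m = A k := by
    rintro m j k rfl; exact hEA m j
  have hE_comm : ∀ m l, Commute (E m) (E l) := fun m l => by
    rw [commute_iff_eq, hEE, hEE, add_comm]
  intro n p q
  constructor
  · have hcomm : Commute (E (q - p)) (A (n - 1 - q) * A p - A p * A (n - 1 - q)) := by
      rw [hAA]
      exact (hE_comm _ _).smul_right _
    rw [← hEA' (q - p) (n - 1 - q) (n - 1 - p) (by ring), ← hEA' (q - p) p q (by ring),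
      anticomm_anticomm_left_eq_of_commute hcomm]
  · rw [smul_mul_assoc, mul_smul_comm, ← smul_sub,
      anticomm_mul_sub_mul_anticomm_eq_smul (hAA p q) (hAA (n - 1 - p) q)
        (hEA' _ _ (n + q) (by ring)) (hEA' _ _ (n + q) (by ring)), smul_smul]
    congr 1
    push_cast
    ring
end

section
/- The adjoint Lie superalgebra of K₃ is osp(1|2): setting E := 2a⊙a, F := −2b⊙b, H := −4a⊙b, A := 2a, B := 2b, the bracket defined by [a,b] = a⊙b, [a⊙b, c] = a(bc) + b(ac), [a⊙b, c⊙d] = 2a(bc)⊙d + 2b(ad)⊙c satisfies the osp(1|2) relations: [H,E] = 2E, [H,F] = −2F, [E,F] = H, [H,A] = A, [E,A] = 0, [F,A] = B, [H,B] = −B, [E,B] = A, [F,B] = 0, [A,B] = −H, [A,A] = 2E, [B,B] = −2F. -/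
/- The odd part of `K₃` is `ℚ × ℚ` with basis `a = (1,0)`, `b = (0,1)`; its even part is
spanned by `ε`.  The even part of the adjoint Lie superalgebra is the symmetric square of
the odd part, with coordinates `(α, β, γ)` on the basis `(a⊙a, a⊙b, b⊙b)`. -/

/-- The ε-coefficient of the `K₃`-product of two odd elements:
`u·v = ½(u₁v₂ − u₂v₁)ε`. -/
def k3odd (u v : ℚ × ℚ) : ℚ := (u.1 * v.2 - u.2 * v.1) / 2

/-- The symmetric square `u⊙v` of two odd elements of `K₃`, in coordinates
`(a⊙a, a⊙b, b⊙b)`. -/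
def symK3 (u v : ℚ × ℚ) : ℚ × ℚ × ℚ := (u.1 * v.1, u.1 * v.2 + u.2 * v.1, u.2 * v.2)

/-- The bracket `[·,·] : g₀ × g₁ → g₁` of the adjoint Lie superalgebra of `K₃`
(bilinear extension of `[a⊙b, c] = a(bc) + b(ac)`). -/
def brEO (w : ℚ × ℚ × ℚ) (u : ℚ × ℚ) : ℚ × ℚ :=
  (w.1 * u.2 / 2 - w.2.1 * u.1 / 4, w.2.1 * u.2 / 4 - w.2.2 * u.1 / 2)

/-- The bracket `[·,·] : g₀ × g₀ → g₀` of the adjoint Lie superalgebra of `K₃`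
(bilinear extension of `[a⊙b, c⊙d] = 2a(bc)⊙d + 2b(ad)⊙c`). -/
def brEE (w w' : ℚ × ℚ × ℚ) : ℚ × ℚ × ℚ :=
  ((w.1 * w'.2.1 - w.2.1 * w'.1) / 2,
   w.1 * w'.2.2 - w.2.2 * w'.1,
   (w.2.1 * w'.2.2 - w.2.2 * w'.2.1) / 2)

theorem brEE_symK3 (u v s t : ℚ × ℚ) :
    brEE (symK3 u v) (symK3 s t) = k3odd v s • symK3 u t + k3odd u t • symK3 v s := by
  simp only [brEE, symK3, k3odd, Prod.smul_mk, Prod.mk_add_mk, smul_eq_mul]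
  ext <;> ring

/-- The factor `1/2` is `a·ε = ½a`: the `K₃`-product `a(bc)` is `½ k3odd b c • a`. -/
theorem brEO_symK3 (u v c : ℚ × ℚ) :
    brEO (symK3 u v) c = (k3odd v c / 2) • u + (k3odd u c / 2) • v := by
  simp only [brEO, symK3, k3odd, Prod.smul_def, Prod.mk_add_mk, smul_eq_mul]
  ext <;> ring

/-- The adjoint Lie superalgebra of `K₃` is `osp(1|2)`.  The brackets
`brEE`, `brEO`, `symK3` are the bilinear extensions of `[a⊙b, c⊙d] = 2a(bc)⊙d + 2b(ad)⊙c`,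
`[a⊙b, c] = a(bc) + b(ac)`, `[a,b] = a⊙b` (first two conjuncts; note
`a(bc) = ½ k3odd(b,c) • a` since `a·ε = ½a`), and with `E := 2a⊙a`, `F := −2b⊙b`,
`H := −4a⊙b`, `A := 2a`, `B := 2b` they satisfy the `osp(1|2)` relations. -/
theorem adjoint_of_K3_is_osp12 :
    -- the brackets are the bilinear extensions of the defining formulas
    (∀ u v s t : ℚ × ℚ,
      brEE (symK3 u v) (symK3 s t) = k3odd v s • symK3 u t + k3odd u t • symK3 v s) ∧
    (∀ u v c : ℚ × ℚ,
      brEO (symK3 u v) c = (k3odd v c / 2) • u + (k3odd u c / 2) • v) ∧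
    -- the osp(1|2) relations for E,F,H,A,B
    (∀ E F H A B, E = (2 : ℚ) • symK3 (1,0) (1,0) → F = (-2 : ℚ) • symK3 (0,1) (0,1) →
      H = (-4 : ℚ) • symK3 (1,0) (0,1) → A = (2 : ℚ) • ((1,0) : ℚ × ℚ) →
      B = (2 : ℚ) • ((0,1) : ℚ × ℚ) →
      brEE H E = (2 : ℚ) • E ∧ brEE H F = (-2 : ℚ) • F ∧ brEE E F = H ∧
      brEO H A = A ∧ brEO E A = 0 ∧ brEO F A = B ∧
      brEO H B = -B ∧ brEO E B = A ∧ brEO F B = 0 ∧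
      symK3 A B = -H ∧ symK3 A A = (2 : ℚ) • E ∧ symK3 B B = (-2 : ℚ) • F) := by
  refine ⟨brEE_symK3, brEO_symK3, ?_⟩
  rintro E F H A B rfl rfl rfl rfl rfl
  norm_num [brEE, brEO, symK3, Prod.ext_iff]
end

section
/- In a Lie antialgebra a, for all odd elements a, b, c ∈ a₁ and all even x ∈ a₀, the expression a((bx)c) + (bx)(ac) − (ax)(bc) − b((ax)c) vanishes. Consequently the bracket [a⊙b, c] := a(bc) + b(ac) on the adjoint Lie superalgebra is well-defined modulo the relation ax⊙b = a⊙bx. -/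
/-!
Write `p = xa`, `q = xb`, `r = xc`. The Jacobi identity (LA3) for the triples `(a, q, c)` and
`(b, p, c)` reduces the expression to `2 q(ac) − 2 p(bc) − c(aq) + c(bp)`. Multiplying LA3 for
`(a, b, c)` by `x` and expanding with LA1 and LA2 shows that `p(bc) + q(ca) + r(ab) = 0`, so
`2 q(ac) − 2 p(bc) = 2 r(ab)`. Finally LA2 gives `c(aq) − c(bp) = c(x(ab))`, which LA1 identifies
with `2 r(ab)`.
-/

structure IsLieAntialgebra_s12 {K A : Type*} [Field K] [AddCommGroup A] [Module K A]
    (mul : A →ₗ[K] A →ₗ[K] A) (A0 A1 : Submodule K A) : Prop where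
  mul_mem_even_even : ∀ x ∈ A0, ∀ y ∈ A0, mul x y ∈ A0
  mul_mem_even_odd : ∀ x ∈ A0, ∀ a ∈ A1, mul x a ∈ A1
  mul_mem_odd_odd : ∀ a ∈ A1, ∀ b ∈ A1, mul a b ∈ A0
  comm_even_even : ∀ x ∈ A0, ∀ y ∈ A0, mul x y = mul y x
  comm_even_odd : ∀ x ∈ A0, ∀ a ∈ A1, mul x a = mul a x
  anticomm_odd_odd : ∀ a ∈ A1, ∀ b ∈ A1, mul a b = - mul b a
  even_mul_even_mul_odd : ∀ x1 ∈ A0, ∀ x2 ∈ A0, ∀ y ∈ A1,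
    mul x1 (mul x2 y) = (1/2 : K) • mul (mul x1 x2) y
  leibniz : ∀ x ∈ A0, ∀ y1 ∈ A1, ∀ y2 ∈ A1,
    mul x (mul y1 y2) = mul (mul x y1) y2 + mul y1 (mul x y2)
  jacobi : ∀ y1 ∈ A1, ∀ y2 ∈ A1, ∀ y3 ∈ A1,
    mul y1 (mul y2 y3) + mul y2 (mul y3 y1) + mul y3 (mul y1 y2) = 0

namespace IsLieAntialgebra_s12

variable {K A : Type*} [Field K] [AddCommGroup A] [Module K A]
  {mul : A →ₗ[K] A →ₗ[K] A} {A0 A1 : Submodule K A}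

theorem odd_mul_even_mul_even [NeZero (2 : K)] (h : IsLieAntialgebra_s12 mul A0 A1)
    {x u c : A} (hx : x ∈ A0) (hu : u ∈ A0) (hc : c ∈ A1) :
    mul c (mul x u) = (2 : K) • mul (mul x c) u := by
  have hxc := h.mul_mem_even_odd x hx c hc
  have hxu := h.mul_mem_even_even x hx u hu
  calc mul c (mul x u) = mul (mul u x) c := by
        rw [← h.comm_even_odd _ hxu c hc, h.comm_even_even x hx u hu]
    _ = (2 : K) • mul u (mul x c) := by
        rw [h.even_mul_even_mul_odd u hu x hx c hc, smul_smul,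
          mul_one_div_cancel (NeZero.ne 2), one_smul]
    _ = (2 : K) • mul (mul x c) u := by rw [h.comm_even_odd u hu _ hxc]

theorem even_mul_odd_mul_odd_mul_odd (h : IsLieAntialgebra_s12 mul A0 A1)
    {x a b c : A} (hx : x ∈ A0) (ha : a ∈ A1) (hb : b ∈ A1) (hc : c ∈ A1) :
    mul x (mul a (mul b c)) = (1/2 : K) • (mul a (mul (mul x b) c) + mul a (mul b (mul x c))) := by
  have hbc := h.mul_mem_odd_odd b hb c hc
  calc mul x (mul a (mul b c)) = (1/2 : K) • mul (mul x (mul b c)) a := by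
        rw [← h.comm_even_odd _ hbc a ha, h.even_mul_even_mul_odd x hx _ hbc a ha]
    _ = (1/2 : K) • mul a (mul x (mul b c)) := by
        rw [h.comm_even_odd _ (h.mul_mem_even_even x hx _ hbc) a ha]
    _ = _ := by rw [h.leibniz x hx b hb c hc, map_add]

theorem even_mul_odd_mul_odd_cyclic_sum [NeZero (2 : K)] (h : IsLieAntialgebra_s12 mul A0 A1)
    {x a b c : A} (hx : x ∈ A0) (ha : a ∈ A1) (hb : b ∈ A1) (hc : c ∈ A1) :
    mul (mul x a) (mul b c) + mul (mul x b) (mul c a) + mul (mul x c) (mul a b) = 0 := by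
  have hp := h.mul_mem_even_odd x hx a ha
  have hq := h.mul_mem_even_odd x hx b hb
  have hr := h.mul_mem_even_odd x hx c hc
  have hsix : mul a (mul (mul x b) c) + mul a (mul b (mul x c))
      + (mul b (mul (mul x c) a) + mul b (mul c (mul x a)))
      + (mul c (mul (mul x a) b) + mul c (mul a (mul x b))) = 0 := by
    have hx_jacobi := congrArg (mul x) (h.jacobi a ha b hb c hc)
    rw [map_add, map_add, map_zero, h.even_mul_odd_mul_odd_mul_odd hx ha hb hc,
      h.even_mul_odd_mul_odd_mul_odd hx hb hc ha, h.even_mul_odd_mul_odd_mul_odd hx hc ha hb,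
      ← smul_add, ← smul_add] at hx_jacobi
    exact (smul_eq_zero.mp hx_jacobi).resolve_left (one_div_ne_zero (NeZero.ne 2))
  linear_combination (norm := module)
    h.jacobi a ha _ hq c hc + h.jacobi b hb _ hr a ha + h.jacobi c hc _ hp b hb - hsix

theorem adjoint_bracket_well_defined [NeZero (2 : K)] (h : IsLieAntialgebra_s12 mul A0 A1)
    {x a b c : A} (hx : x ∈ A0) (ha : a ∈ A1) (hb : b ∈ A1) (hc : c ∈ A1) :
    mul a (mul (mul x b) c) + mul (mul x b) (mul a c)
      - mul (mul x a) (mul b c) - mul b (mul (mul x a) c) = 0 := by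
  have hp := h.mul_mem_even_odd x hx a ha
  have hq := h.mul_mem_even_odd x hx b hb
  have hca : mul (mul x b) (mul c a) = - mul (mul x b) (mul a c) := by
    rw [h.anticomm_odd_odd c hc a ha, map_neg]
  have hcb : mul (mul x a) (mul c b) = - mul (mul x a) (mul b c) := by
    rw [h.anticomm_odd_odd c hc b hb, map_neg]
  have hpb : mul c (mul (mul x a) b) = - mul c (mul b (mul x a)) := by
    rw [h.anticomm_odd_odd _ hp b hb, map_neg]
  have hcx : mul c (mul x (mul a b)) = mul c (mul (mul x a) b) + mul c (mul a (mul x b)) := by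
    rw [h.leibniz x hx a ha b hb, map_add]
  linear_combination (norm := module)
    h.jacobi a ha _ hq c hc - h.jacobi b hb _ hp c hc + hca + hcb + hpb + hcx
      - (2 : K) • h.even_mul_odd_mul_odd_cyclic_sum hx ha hb hc
      - h.odd_mul_even_mul_even hx (h.mul_mem_odd_odd a ha b hb) hc

end IsLieAntialgebra_s12

/-- In a Lie antialgebra, for odd `a, b, c` and even `x`,
`a((bx)c) + (bx)(ac) − (ax)(bc) − b((ax)c) = 0`; consequently the bracket
`[a⊙b, c] := a(bc) + b(ac)` on the adjoint Lie superalgebra is compatible with the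
relation `ax⊙b = a⊙bx`. -/
theorem liealgebra_adjoint_bracket_well_defined
    {K : Type*} [Field K] [CharZero K] {A : Type*} [AddCommGroup A] [Module K A]
    (mul : A →ₗ[K] A →ₗ[K] A) (A0 A1 : Submodule K A)
    (h00 : ∀ x ∈ A0, ∀ y ∈ A0, mul x y ∈ A0)
    (h01 : ∀ x ∈ A0, ∀ a ∈ A1, mul x a ∈ A1)
    (h11 : ∀ a ∈ A1, ∀ b ∈ A1, mul a b ∈ A0)
    (hcomm00 : ∀ x ∈ A0, ∀ y ∈ A0, mul x y = mul y x)
    (hcomm01 : ∀ x ∈ A0, ∀ a ∈ A1, mul x a = mul a x)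
    (hanti : ∀ a ∈ A1, ∀ b ∈ A1, mul a b = - mul b a)
    (hLA1 : ∀ x1 ∈ A0, ∀ x2 ∈ A0, ∀ y ∈ A1,
      mul x1 (mul x2 y) = (1/2 : K) • mul (mul x1 x2) y)
    (hLA2 : ∀ x ∈ A0, ∀ y1 ∈ A1, ∀ y2 ∈ A1,
      mul x (mul y1 y2) = mul (mul x y1) y2 + mul y1 (mul x y2))
    (hLA3 : ∀ y1 ∈ A1, ∀ y2 ∈ A1, ∀ y3 ∈ A1,
      mul y1 (mul y2 y3) + mul y2 (mul y3 y1) + mul y3 (mul y1 y2) = 0) :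
    ∀ a ∈ A1, ∀ b ∈ A1, ∀ c ∈ A1, ∀ x ∈ A0,
      mul a (mul (mul b x) c) + mul (mul b x) (mul a c)
        - mul (mul a x) (mul b c) - mul b (mul (mul a x) c) = 0 := by
  intro a ha b hb c hc x hx
  have h : IsLieAntialgebra_s12 mul A0 A1 :=
    ⟨h00, h01, h11, hcomm00, hcomm01, hanti, hLA1, hLA2, hLA3⟩
  rw [← hcomm01 x hx b hb, ← hcomm01 x hx a ha]
  exact h.adjoint_bracket_well_defined hx ha hb hc
end

section
/- In a Lie antialgebra a, for odd elements a, b, c, d ∈ a₁, one has the identity 2a(bc)⊙d + 2b(ad)⊙c = a(bc)⊙d + b(ad)⊙c + b(ac)⊙d + a(bd)⊙c in the quotient space (a₁⊗a₁)/S, where S is spanned by the relations u⊗v − v⊗u and (ux)⊗v − u⊗(vx) for u,v ∈ a₁, x ∈ a₀. -/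
open TensorProduct

/-! With `x = ab ∈ a₀`, the odd Jacobi identity and antisymmetry give `a(bc) − b(ac) = −c(ab)`
and `b(ad) − a(bd) = d(ab)`, so the element equals `(dx)⊗c − (cx)⊗d`. Modulo `S` one has
`(cx)⊙d = c⊙(dx) = (dx)⊙c`, hence it vanishes. -/

section OddProducts

variable {K A : Type*} [CommRing K] [AddCommGroup A] [Module K A]
  (mul : A →ₗ[K] A →ₗ[K] A) {A0 A1 : Submodule K A}

theorem mul_mul_eq_mul_mul_sub (hanti : ∀ a ∈ A1, ∀ b ∈ A1, mul a b = - mul b a)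
    (hLA3 : ∀ y1 ∈ A1, ∀ y2 ∈ A1, ∀ y3 ∈ A1,
      mul y1 (mul y2 y3) + mul y2 (mul y3 y1) + mul y3 (mul y1 y2) = 0)
    {a b c : A} (ha : a ∈ A1) (hb : b ∈ A1) (hc : c ∈ A1) :
    mul a (mul b c) = mul b (mul a c) - mul c (mul a b) := by
  have jacobi := hLA3 a ha b hb c hc
  rw [hanti c hc a ha, map_neg] at jacobi
  rw [eq_sub_iff_add_eq, ← sub_eq_zero, ← jacobi]
  abel

theorem mul_tmul_sub_mul_tmul_mem (h10 : ∀ a ∈ A1, ∀ x ∈ A0, mul a x ∈ A1)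
    {N : Submodule K (A1 ⊗[K] A1)} (hsymm : ∀ u v : A1, u ⊗ₜ[K] v - v ⊗ₜ[K] u ∈ N)
    (hshift : ∀ (u v : A1) (x : A) (hx : x ∈ A0),
      (⟨mul u x, h10 _ u.2 _ hx⟩ : A1) ⊗ₜ[K] v - u ⊗ₜ[K] (⟨mul v x, h10 _ v.2 _ hx⟩ : A1) ∈ N)
    (u v : A1) {x : A} (hx : x ∈ A0) :
    (⟨mul u x, h10 _ u.2 _ hx⟩ : A1) ⊗ₜ[K] v - (⟨mul v x, h10 _ v.2 _ hx⟩ : A1) ⊗ₜ[K] u ∈ N := by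
  simpa using N.add_mem (hshift u v x hx) (hsymm u ⟨mul v x, h10 _ v.2 _ hx⟩)

end OddProducts

theorem liealgebra_even_bracket_symmetrization_general
    {K : Type*} [Field K] {A : Type*} [AddCommGroup A] [Module K A]
    (mul : A →ₗ[K] A →ₗ[K] A) (A0 A1 : Submodule K A)
    (h10 : ∀ a ∈ A1, ∀ x ∈ A0, mul a x ∈ A1)
    (h11 : ∀ a ∈ A1, ∀ b ∈ A1, mul a b ∈ A0)
    (hanti : ∀ a ∈ A1, ∀ b ∈ A1, mul a b = - mul b a)
    (hLA3 : ∀ y1 ∈ A1, ∀ y2 ∈ A1, ∀ y3 ∈ A1,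
      mul y1 (mul y2 y3) + mul y2 (mul y3 y1) + mul y3 (mul y1 y2) = 0) :
    ∀ a b c d : A1,
      ((⟨mul a (mul b c), h10 _ a.2 _ (h11 _ b.2 _ c.2)⟩ : A1) ⊗ₜ[K] d
        + (⟨mul b (mul a d), h10 _ b.2 _ (h11 _ a.2 _ d.2)⟩ : A1) ⊗ₜ[K] c
        - (⟨mul b (mul a c), h10 _ b.2 _ (h11 _ a.2 _ c.2)⟩ : A1) ⊗ₜ[K] d
        - (⟨mul a (mul b d), h10 _ a.2 _ (h11 _ b.2 _ d.2)⟩ : A1) ⊗ₜ[K] c)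
      ∈ Submodule.span K
          ({t : A1 ⊗[K] A1 | ∃ u v : A1, t = u ⊗ₜ[K] v - v ⊗ₜ[K] u} ∪
           {t : A1 ⊗[K] A1 | ∃ u v : A1, ∃ x, ∃ hx : x ∈ A0,
             t = (⟨mul u x, h10 _ u.2 _ hx⟩ : A1) ⊗ₜ[K] v
                 - u ⊗ₜ[K] (⟨mul v x, h10 _ v.2 _ hx⟩ : A1)}) := by
  intro a b c d
  have hab : mul (a : A) b ∈ A0 := h11 _ a.2 _ b.2
  have habc : (⟨mul a (mul b c), h10 _ a.2 _ (h11 _ b.2 _ c.2)⟩ : A1)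
      = ⟨mul b (mul a c), h10 _ b.2 _ (h11 _ a.2 _ c.2)⟩ - ⟨mul c (mul a b), h10 _ c.2 _ hab⟩ :=
    Subtype.ext (mul_mul_eq_mul_mul_sub mul hanti hLA3 a.2 b.2 c.2)
  have hbad : (⟨mul b (mul a d), h10 _ b.2 _ (h11 _ a.2 _ d.2)⟩ : A1)
      = ⟨mul a (mul b d), h10 _ a.2 _ (h11 _ b.2 _ d.2)⟩ + ⟨mul d (mul a b), h10 _ d.2 _ hab⟩ :=
    Subtype.ext (by
      change mul b (mul a d) = mul a (mul b d) + mul d (mul a b)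
      rw [mul_mul_eq_mul_mul_sub mul hanti hLA3 b.2 a.2 d.2,
        hanti _ b.2 _ a.2, map_neg, sub_neg_eq_add])
  have regroup : ∀ p q r s : A1 ⊗[K] A1, p - q + (r + s) - p - r = -(q - s) := by
    intros; abel
  rw [habc, hbad, add_tmul, sub_tmul, regroup]
  exact Submodule.neg_mem _ (mul_tmul_sub_mul_tmul_mem mul h10
    (fun u v => Submodule.subset_span (Or.inl ⟨u, v, rfl⟩))
    (fun u v x hx => Submodule.subset_span (Or.inr ⟨u, v, x, hx, rfl⟩)) c d hab)

/-- In a Lie antialgebra, for odd `a, b, c, d`, one has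
`2a(bc)⊙d + 2b(ad)⊙c = a(bc)⊙d + b(ad)⊙c + b(ac)⊙d + a(bd)⊙c` in `(a₁ ⊗ a₁)/S`;
equivalently, `a(bc)⊗d + b(ad)⊗c − b(ac)⊗d − a(bd)⊗c` lies in the span of
`S = {u⊗v − v⊗u} ∪ {(ux)⊗v − u⊗(vx)}` (`u, v ∈ a₁`, `x ∈ a₀`) inside `a₁ ⊗ a₁`. -/
theorem liealgebra_even_bracket_symmetrization
    {K : Type*} [Field K] [CharZero K] {A : Type*} [AddCommGroup A] [Module K A]
    (mul : A →ₗ[K] A →ₗ[K] A) (A0 A1 : Submodule K A)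
    (h00 : ∀ x ∈ A0, ∀ y ∈ A0, mul x y ∈ A0)
    (h10 : ∀ a ∈ A1, ∀ x ∈ A0, mul a x ∈ A1)
    (h11 : ∀ a ∈ A1, ∀ b ∈ A1, mul a b ∈ A0)
    (hcomm00 : ∀ x ∈ A0, ∀ y ∈ A0, mul x y = mul y x)
    (hcomm01 : ∀ x ∈ A0, ∀ a ∈ A1, mul x a = mul a x)
    (hanti : ∀ a ∈ A1, ∀ b ∈ A1, mul a b = - mul b a)
    (hLA1 : ∀ x1 ∈ A0, ∀ x2 ∈ A0, ∀ y ∈ A1,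
      mul x1 (mul x2 y) = (1/2 : K) • mul (mul x1 x2) y)
    (hLA2 : ∀ x ∈ A0, ∀ y1 ∈ A1, ∀ y2 ∈ A1,
      mul x (mul y1 y2) = mul (mul x y1) y2 + mul y1 (mul x y2))
    (hLA3 : ∀ y1 ∈ A1, ∀ y2 ∈ A1, ∀ y3 ∈ A1,
      mul y1 (mul y2 y3) + mul y2 (mul y3 y1) + mul y3 (mul y1 y2) = 0) :
    ∀ a b c d : A1,
      ((⟨mul a (mul b c), h10 _ a.2 _ (h11 _ b.2 _ c.2)⟩ : A1) ⊗ₜ[K] d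
        + (⟨mul b (mul a d), h10 _ b.2 _ (h11 _ a.2 _ d.2)⟩ : A1) ⊗ₜ[K] c
        - (⟨mul b (mul a c), h10 _ b.2 _ (h11 _ a.2 _ c.2)⟩ : A1) ⊗ₜ[K] d
        - (⟨mul a (mul b d), h10 _ a.2 _ (h11 _ b.2 _ d.2)⟩ : A1) ⊗ₜ[K] c)
      ∈ Submodule.span K
          ({t : A1 ⊗[K] A1 | ∃ u v : A1, t = u ⊗ₜ[K] v - v ⊗ₜ[K] u} ∪
           {t : A1 ⊗[K] A1 | ∃ u v : A1, ∃ x, ∃ hx : x ∈ A0,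
             t = (⟨mul u x, h10 _ u.2 _ hx⟩ : A1) ⊗ₜ[K] v
                 - u ⊗ₜ[K] (⟨mul v x, h10 _ v.2 _ hx⟩ : A1)}) :=
  liealgebra_even_bracket_symmetrization_general mul A0 A1 h10 h11 hanti hLA3
end

section
/- Let F_λ be the density representation of the conformal Lie superalgebra K(1) with basis {f_n : n ∈ ℤ} ∪ {φ_i : i ∈ ℤ+½}, and define operators χ_{ε_n} := (1/(j−i))(χ_{a_i}χ_{a_j} − χ_{a_j}χ_{a_i}) for any i ≠ j with i + j = n. Then χ_{ε_n}(f_m) = 2λ f_{n+m} and χ_{ε_n}(φ_i) = (1−2λ)φ_{n+i}; in particular this is well-defined, independent of the choice of (i,j). Moreover the relation χ_{ε_n}χ_{ε_m} = χ_{ε_{n+m}} holds for all n, m if and only if λ = 0 or λ = ½. -/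
/-- The density module `F_λ` of the conformal Lie superalgebra `K(1)`: the first
component gives the coordinates on the even basis `{f_n, n ∈ ℤ}`, the second the
coordinates on the odd basis `{φ_i, i ∈ ℤ + ½}`, the half-integer index `i = p + ½`
being encoded by the integer `p`. -/
abbrev DensityMod : Type := (ℤ →₀ ℂ) × (ℤ →₀ ℂ)

/-- The operator `χ_{a_i}` (`i = p + ½`) on `F_λ`:
`χ_{a_i}(f_n) = (n/2 + λi)φ_{i+n}`, `χ_{a_i}(φ_j) = 2f_{i+j}`. -/
noncomputable def chiA (lam : ℂ) (p : ℤ) (v : DensityMod) : DensityMod :=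
  (v.2.sum fun q c => Finsupp.single (p + q + 1) (2 * c),
   v.1.sum fun n c => Finsupp.single (p + n) (((n : ℂ) / 2 + lam * ((p : ℂ) + 1/2)) * c))

/-- The operator `χ_{ε_n}` on `F_λ`:
`χ_{ε_n}(f_m) = 2λ f_{n+m}`, `χ_{ε_n}(φ_i) = (1 − 2λ)φ_{n+i}`. -/
noncomputable def chiE (lam : ℂ) (n : ℤ) (v : DensityMod) : DensityMod :=
  (v.1.sum fun m c => Finsupp.single (n + m) (2 * lam * c),
   v.2.sum fun r c => Finsupp.single (n + r) ((1 - 2 * lam) * c))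

/-!
Every operator involved is a weighted translation `f_n ↦ w(n) f_{k+n}` of the coordinate
sequences. Composing two of them adds the shifts and multiplies the weights, so the bracket
`χ_{a_i}χ_{a_j} − χ_{a_j}χ_{a_i}` is again a translation by `i + j`, with a weight in which the
`n`-dependence cancels, leaving `(j − i)·2λ` on the even part and `(j − i)(1 − 2λ)` on the odd part.
Likewise `χ_{ε_n}χ_{ε_m} = χ_{ε_{n+m}}` says exactly that the weights `2λ` and `1 − 2λ` are
idempotent, i.e. `2λ ∈ {0, 1}`.
-/

open Finsupp

noncomputable def weightedTranslate {M R : Type*} [Add M] [Semiring R] (k : M) (w : M → R)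
    (f : M →₀ R) : M →₀ R :=
  f.sum fun n c => single (k + n) (w n * c)

section WeightedTranslate

variable {M R : Type*}

theorem weightedTranslate_single [Add M] [Semiring R] (k : M) (w : M → R) (n : M) (c : R) :
    weightedTranslate k w (single n c) = single (k + n) (w n * c) :=
  sum_single_index (by simp)

theorem weightedTranslate_weightedTranslate [AddSemigroup M] [Semiring R] (k l : M)
    (g h : M → R) (f : M →₀ R) :
    weightedTranslate k h (weightedTranslate l g f)
      = weightedTranslate (k + l) (fun n => h (l + n) * g n) f := by
  rw [weightedTranslate, weightedTranslate,
    sum_sum_index (fun _ => by simp) fun _ _ _ => by rw [mul_add, single_add]]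
  refine sum_congr fun n _ => ?_
  rw [sum_single_index (by simp), add_assoc, mul_assoc]

theorem smul_sub_weightedTranslate [Add M] [Ring R] (k : M) (w₁ w₂ : M → R) (c : R)
    (f : M →₀ R) :
    c • (weightedTranslate k w₁ f - weightedTranslate k w₂ f)
      = weightedTranslate k (fun n => c * (w₁ n - w₂ n)) f := by
  rw [weightedTranslate, weightedTranslate, weightedTranslate, Finsupp.sum, Finsupp.sum,
    Finsupp.sum, ← Finset.sum_sub_distrib, Finset.smul_sum]
  refine Finset.sum_congr rfl fun n _ => ?_
  rw [← single_sub, smul_single, smul_eq_mul, ← sub_mul, mul_assoc]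

end WeightedTranslate

section Density

variable (lam : ℂ)

theorem chiA_fst (p : ℤ) (v : DensityMod) :
    (chiA lam p v).1 = weightedTranslate (p + 1) (fun _ => 2) v.2 := by
  unfold chiA weightedTranslate
  dsimp only
  exact Finsupp.sum_congr fun q _ => by rw [add_right_comm]

theorem chiA_snd (p : ℤ) (v : DensityMod) :
    (chiA lam p v).2
      = weightedTranslate p (fun n => (n : ℂ) / 2 + lam * ((p : ℂ) + 1 / 2)) v.1 :=
  rfl

theorem chiE_eq (n : ℤ) (v : DensityMod) :
    chiE lam n v
      = (weightedTranslate n (fun _ => 2 * lam) v.1,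
        weightedTranslate n (fun _ => 1 - 2 * lam) v.2) :=
  rfl

theorem chiA_bracket {p q : ℤ} (hpq : p ≠ q) (v : DensityMod) :
    (1 / ((q : ℂ) - (p : ℂ))) • (chiA lam p (chiA lam q v) - chiA lam q (chiA lam p v))
      = chiE lam (p + q + 1) v := by
  have hqp : (q : ℂ) - p ≠ 0 := sub_ne_zero.mpr (by exact_mod_cast hpq.symm)
  refine Prod.ext ?_ ?_
  · simp only [Prod.smul_fst, Prod.fst_sub, chiA_fst, chiA_snd, chiE_eq,
      weightedTranslate_weightedTranslate]
    rw [show p + 1 + q = p + q + 1 by ring, show q + 1 + p = p + q + 1 by ring,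
      smul_sub_weightedTranslate]
    congr 1
    funext n
    field_simp
    ring
  · simp only [Prod.smul_snd, Prod.snd_sub, chiA_fst, chiA_snd, chiE_eq,
      weightedTranslate_weightedTranslate]
    rw [show p + (q + 1) = p + q + 1 by ring, show q + (p + 1) = p + q + 1 by ring,
      smul_sub_weightedTranslate]
    congr 1
    funext r
    push_cast
    field_simp
    ring

theorem chiE_chiE (n m : ℤ) (v : DensityMod) :
    chiE lam n (chiE lam m v)
      = (weightedTranslate (n + m) (fun _ => 2 * lam * (2 * lam)) v.1,
        weightedTranslate (n + m) (fun _ => (1 - 2 * lam) * (1 - 2 * lam)) v.2) := by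
  simp only [chiE_eq, weightedTranslate_weightedTranslate]

theorem chiE_chiE_eq_chiE_add_iff :
    (∀ n m : ℤ, ∀ v : DensityMod, chiE lam n (chiE lam m v) = chiE lam (n + m) v)
      ↔ IsIdempotentElem (2 * lam) := by
  constructor
  · intro h
    have h₀ := congrArg Prod.fst (h 0 0 (single 0 1, 0))
    simp only [chiE_eq, weightedTranslate_single] at h₀
    simpa [IsIdempotentElem] using single_injective _ h₀
  · intro h n m v
    rw [chiE_chiE, chiE_eq, h.eq, h.one_sub.eq]

theorem isIdempotentElem_two_mul_iff : IsIdempotentElem (2 * lam) ↔ lam = 0 ∨ lam = 1 / 2 := by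
  rw [IsIdempotentElem.iff_eq_zero_or_one, mul_eq_zero, or_iff_right two_ne_zero]
  exact or_congr_right ⟨fun h => by linear_combination h / 2, fun h => by linear_combination 2 * h⟩

end Density

/-- For any `i ≠ j` with `i + j = n` (encoded `i = p + ½`, `j = q + ½`,
so `p ≠ q`, `n = p + q + 1`, `j − i = q − p`), the operator
`(1/(j−i))(χ_{a_i}χ_{a_j} − χ_{a_j}χ_{a_i})` equals `χ_{ε_n}`, i.e. it acts by
`f_m ↦ 2λ f_{n+m}`, `φ_i ↦ (1−2λ)φ_{n+i}`; in particular it is independent of the choice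
of `(i,j)`.  Moreover `χ_{ε_n}χ_{ε_m} = χ_{ε_{n+m}}` holds for all `n, m` iff `λ = 0` or
`λ = ½`. -/
theorem density_chiE_well_defined_and_multiplicativity_iff (lam : ℂ) :
    (∀ p q : ℤ, p ≠ q → ∀ v : DensityMod,
      (1 / ((q : ℂ) - (p : ℂ))) • (chiA lam p (chiA lam q v) - chiA lam q (chiA lam p v))
        = chiE lam (p + q + 1) v) ∧
    ((∀ n m : ℤ, ∀ v : DensityMod, chiE lam n (chiE lam m v) = chiE lam (n + m) v)
      ↔ lam = 0 ∨ lam = 1/2) := by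
  exact ⟨fun _ _ hpq => chiA_bracket lam hpq,
    (chiE_chiE_eq_chiE_add_iff lam).trans (isIdempotentElem_two_mul_iff lam)⟩
end

section
/- With the operators χ_{a_i} of the density representation F_λ of K(1) and χ_{ε_n} defined by χ_{ε_n}(f_m) = 2λf_{n+m}, χ_{ε_n}(φ_i) = (1−2λ)φ_{n+i}, the relation χ_{ε_n}χ_{a_i} + χ_{a_i}χ_{ε_n} = χ_{a_{n+i}} holds for every value of λ. -/
namespace Finsupp

variable {ι κ R : Type*} [CommSemiring R]

noncomputable def weightedShift (g : ι → κ) (w : ι → R) : (ι →₀ R) →ₗ[R] (κ →₀ R) :=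
  lsum R fun i => lsingle (g i) ∘ₗ LinearMap.mulLeft R (w i)

theorem single_add_single_of_eq {M : Type*} [AddZeroClass M] {a b c : ι} {x y z : M}
    (ha : a = c) (hb : b = c) (h : x + y = z) : single a x + single b y = single c z := by
  subst ha hb h
  exact (single_add _ _ _).symm

end Finsupp

open Finsupp

noncomputable def chiALinear (lam : ℂ) (p : ℤ) : DensityMod →ₗ[ℂ] DensityMod :=
  (weightedShift (fun q => p + q + 1) (fun _ => 2) ∘ₗ LinearMap.snd ℂ _ _).prod
    (weightedShift (p + ·) (fun n => (n : ℂ) / 2 + lam * ((p : ℂ) + 1/2)) ∘ₗ LinearMap.fst ℂ _ _)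

noncomputable def chiELinear (lam : ℂ) (n : ℤ) : DensityMod →ₗ[ℂ] DensityMod :=
  (weightedShift (n + ·) (fun _ => 2 * lam) ∘ₗ LinearMap.fst ℂ _ _).prod
    (weightedShift (n + ·) (fun _ => 1 - 2 * lam) ∘ₗ LinearMap.snd ℂ _ _)

theorem coe_chiALinear (lam : ℂ) (p : ℤ) : ⇑(chiALinear lam p) = chiA lam p :=
  rfl

theorem coe_chiELinear (lam : ℂ) (n : ℤ) : ⇑(chiELinear lam n) = chiE lam n :=
  rfl

theorem chiA_inl_single (lam : ℂ) (p m : ℤ) (c : ℂ) :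
    chiA lam p (single m c, 0) =
      (0, single (p + m) (((m : ℂ) / 2 + lam * ((p : ℂ) + 1/2)) * c)) := by
  simp [chiA]

theorem chiA_inr_single (lam : ℂ) (p q : ℤ) (c : ℂ) :
    chiA lam p (0, single q c) = (single (p + q + 1) (2 * c), 0) := by
  simp [chiA]

theorem chiE_inl_single (lam : ℂ) (n m : ℤ) (c : ℂ) :
    chiE lam n (single m c, 0) = (single (n + m) (2 * lam * c), 0) := by
  simp [chiE]

theorem chiE_inr_single (lam : ℂ) (n q : ℤ) (c : ℂ) :
    chiE lam n (0, single q c) = (0, single (n + q) ((1 - 2 * lam) * c)) := by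
  simp [chiE]

theorem chiELinear_comp_chiALinear_add_comp (lam : ℂ) (n p : ℤ) :
    chiELinear lam n ∘ₗ chiALinear lam p + chiALinear lam p ∘ₗ chiELinear lam n =
      chiALinear lam (n + p) := by
  ext m : 3
  all_goals simp only [LinearMap.add_apply, LinearMap.comp_apply, LinearMap.inl_apply,
    LinearMap.inr_apply, lsingle_apply, coe_chiALinear, coe_chiELinear, chiA_inl_single,
    chiA_inr_single, chiE_inl_single, chiE_inr_single, Prod.mk_add_mk, add_zero]
  all_goals congr 1; exact single_add_single_of_eq (by ring) (by ring) (by push_cast; ring)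

/-- For every value of `λ`, the relation
`χ_{ε_n}χ_{a_i} + χ_{a_i}χ_{ε_n} = χ_{a_{n+i}}` holds on `F_λ`. -/
theorem density_chiE_chiA_anticommutator (lam : ℂ) :
    ∀ (n p : ℤ) (v : DensityMod),
      chiE lam n (chiA lam p v) + chiA lam p (chiE lam n v) = chiA lam (n + p) v := by
  intro n p v
  simpa only [LinearMap.add_apply, LinearMap.comp_apply, coe_chiALinear, coe_chiELinear] using
    LinearMap.congr_fun (chiELinear_comp_chiALinear_add_comp lam n p) v
end

section
/- Up to isomorphism, the adjoint module V_ad is the only non-trivial finite-dimensional irreducible LA-module of K₃. Concretely: if Irr(σ, ½, m) is an irreducible K₃-module containing a vector v of parity σ with ε·v = ½v, b·v = 0, b·(a·v) = (m/4)v, and Irr(σ, ½, m) is an LA-module (i.e., the split extension K₃ ⊕ V is again a Lie antialgebra), then σ = 1 and m = 1. -/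
/-- The product of the tiny Kaplansky algebra `K₃` on coordinates `(ε, a, b)`. -/
def k3mul (u v : ℚ × ℚ × ℚ) : ℚ × ℚ × ℚ :=
  (u.1 * v.1 + (u.2.1 * v.2.2 - u.2.2 * v.2.1) / 2,
   (u.1 * v.2.1 + v.1 * u.2.1) / 2,
   (u.1 * v.2.2 + v.1 * u.2.2) / 2)

section
variable {V0 V1 : Type*} [AddCommGroup V0] [Module ℚ V0] [AddCommGroup V1] [Module ℚ V1]

/-- The action of an element `k = (ε-, a-, b-coordinates)` of `K₃` on the Z₂-graded space
`V0 × V1`, determined by the parity-respecting operators `ρ(ε) = (Re0, Re1)`,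
`ρ(a) = (Ra0, Ra1)`, `ρ(b) = (Rb0, Rb1)`. -/
def k3act (Re0 : V0 →ₗ[ℚ] V0) (Re1 : V1 →ₗ[ℚ] V1) (Ra0 : V0 →ₗ[ℚ] V1)
    (Ra1 : V1 →ₗ[ℚ] V0) (Rb0 : V0 →ₗ[ℚ] V1) (Rb1 : V1 →ₗ[ℚ] V0)
    (k : ℚ × ℚ × ℚ) (w : V0 × V1) : V0 × V1 :=
  (k.1 • Re0 w.1 + k.2.1 • Ra1 w.2 + k.2.2 • Rb1 w.2,
   k.1 • Re1 w.2 + k.2.1 • Ra0 w.1 + k.2.2 • Rb0 w.1)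

/-- The product on the split null extension `K₃ ⊕ V`:
`(x+v)·(y+w) = x·y + ρ(x)(w) + (−1)^{ȳv̄}ρ(y)(v)`, extended bilinearly using the parity
decompositions of `y` and `v` (the sign `−1` occurs exactly on the odd-odd piece). -/
def extMul (Re0 : V0 →ₗ[ℚ] V0) (Re1 : V1 →ₗ[ℚ] V1) (Ra0 : V0 →ₗ[ℚ] V1)
    (Ra1 : V1 →ₗ[ℚ] V0) (Rb0 : V0 →ₗ[ℚ] V1) (Rb1 : V1 →ₗ[ℚ] V0)
    (p q : (ℚ × ℚ × ℚ) × V0 × V1) : (ℚ × ℚ × ℚ) × V0 × V1 :=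
  (k3mul p.1 q.1,
   k3act Re0 Re1 Ra0 Ra1 Rb0 Rb1 p.1 q.2
     + k3act Re0 Re1 Ra0 Ra1 Rb0 Rb1 (q.1.1, 0, 0) p.2
     + k3act Re0 Re1 Ra0 Ra1 Rb0 Rb1 (0, q.1.2.1, q.1.2.2) (p.2.1, 0)
     - k3act Re0 Re1 Ra0 Ra1 Rb0 Rb1 (0, q.1.2.1, q.1.2.2) (0, p.2.2))

/-! The even elements of the split extension `K₃ ⊕ V` form an associative subalgebra, in which
`ε` is idempotent; hence `ε` acts on even vectors by a projection, whose eigenvalues are `0`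
and `1`, never `½`. So the highest weight vector `v` is odd, and the odd Jacobi identity for
`a, b, v` reads `b·(a·v) = a·(b·v) + (a·b)·v = ε·v / 2 = v / 4`, forcing `m = 1`. -/

section

variable (Re0 : V0 →ₗ[ℚ] V0) (Re1 : V1 →ₗ[ℚ] V1) (Ra0 : V0 →ₗ[ℚ] V1)
    (Ra1 : V1 →ₗ[ℚ] V0) (Rb0 : V0 →ₗ[ℚ] V1) (Rb1 : V1 →ₗ[ℚ] V0)

def extEven : Set ((ℚ × ℚ × ℚ) × V0 × V1) := {p | p.1.2.1 = 0 ∧ p.1.2.2 = 0 ∧ p.2.2 = 0}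

def extOdd : Set ((ℚ × ℚ × ℚ) × V0 × V1) := {p | p.1.1 = 0 ∧ p.2.1 = 0}

@[simp]
theorem k3act_eps (w : V0 × V1) :
    k3act Re0 Re1 Ra0 Ra1 Rb0 Rb1 (1, 0, 0) w = (Re0 w.1, Re1 w.2) := by
  simp [k3act]

@[simp]
theorem k3act_a (w : V0 × V1) :
    k3act Re0 Re1 Ra0 Ra1 Rb0 Rb1 (0, 1, 0) w = (Ra1 w.2, Ra0 w.1) := by
  simp [k3act]

@[simp]
theorem k3act_b (w : V0 × V1) :
    k3act Re0 Re1 Ra0 Ra1 Rb0 Rb1 (0, 0, 1) w = (Rb1 w.2, Rb0 w.1) := by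
  simp [k3act]

theorem isIdempotentElem_eps_act_of_even_assoc
    (hLA0 : ∀ p ∈ extEven, ∀ q ∈ extEven, ∀ r ∈ extEven,
      extMul Re0 Re1 Ra0 Ra1 Rb0 Rb1 p (extMul Re0 Re1 Ra0 Ra1 Rb0 Rb1 q r) =
        extMul Re0 Re1 Ra0 Ra1 Rb0 Rb1 (extMul Re0 Re1 Ra0 Ra1 Rb0 Rb1 p q) r) :
    IsIdempotentElem Re0 := by
  ext w
  simpa [extMul, k3act, k3mul] using congrArg (fun p => p.2.1)
    (hLA0 ((1, 0, 0), 0) (by simp [extEven]) ((1, 0, 0), 0) (by simp [extEven])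
      (0, w, 0) (by simp [extEven]))

theorem b_act_a_act_of_odd_jacobi
    (hLA3 : ∀ p ∈ extOdd, ∀ q ∈ extOdd, ∀ r ∈ extOdd,
      extMul Re0 Re1 Ra0 Ra1 Rb0 Rb1 p (extMul Re0 Re1 Ra0 Ra1 Rb0 Rb1 q r) +
        extMul Re0 Re1 Ra0 Ra1 Rb0 Rb1 q (extMul Re0 Re1 Ra0 Ra1 Rb0 Rb1 r p) +
        extMul Re0 Re1 Ra0 Ra1 Rb0 Rb1 r (extMul Re0 Re1 Ra0 Ra1 Rb0 Rb1 p q) = 0)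
    (w : V1) : Rb0 (Ra1 w) = Ra0 (Rb1 w) + (1 / 2 : ℚ) • Re1 w := by
  have h : Ra0 (Rb1 w) - Rb0 (Ra1 w) + (1 / 2 : ℚ) • Re1 w = 0 := by
    simpa [extMul, k3act, k3mul, sub_eq_add_neg] using congrArg (fun p => p.2.2)
      (hLA3 ((0, 1, 0), 0) (by simp [extOdd]) ((0, 0, 1), 0) (by simp [extOdd])
        (0, 0, w) (by simp [extOdd]))
  linear_combination (norm := module) -h

end

theorem k3_unique_irreducible_LA_module_general
    (Re0 : V0 →ₗ[ℚ] V0) (Re1 : V1 →ₗ[ℚ] V1) (Ra0 : V0 →ₗ[ℚ] V1)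
    (Ra1 : V1 →ₗ[ℚ] V0) (Rb0 : V0 →ₗ[ℚ] V1) (Rb1 : V1 →ₗ[ℚ] V0)
    (mulE : ((ℚ × ℚ × ℚ) × V0 × V1) → ((ℚ × ℚ × ℚ) × V0 × V1) → ((ℚ × ℚ × ℚ) × V0 × V1))
    (hmulE : mulE = extMul Re0 Re1 Ra0 Ra1 Rb0 Rb1)
    (Ev : Set ((ℚ × ℚ × ℚ) × V0 × V1))
    (Od : Set ((ℚ × ℚ × ℚ) × V0 × V1))
    (hEv : Ev = {p | p.1.2.1 = 0 ∧ p.1.2.2 = 0 ∧ p.2.2 = 0})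
    (hOd : Od = {p | p.1.1 = 0 ∧ p.2.1 = 0})
    -- the split extension satisfies (LA0)-(LA3)
    (hLA0 : ∀ p ∈ Ev, ∀ q ∈ Ev, ∀ r ∈ Ev, mulE p (mulE q r) = mulE (mulE p q) r)
    (hLA3 : ∀ p ∈ Od, ∀ q ∈ Od, ∀ r ∈ Od,
      mulE p (mulE q r) + mulE q (mulE r p) + mulE r (mulE p q) = 0)
    -- a nonzero vector of parity σ satisfying the relations of Irr(σ, ½, m)
    (σ : Bool) (m : ℕ) (v : V0 × V1)
    (hv0 : v ≠ 0)
    (hpar : if σ then v.1 = 0 else v.2 = 0)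
    (hev : k3act Re0 Re1 Ra0 Ra1 Rb0 Rb1 (1, 0, 0) v = (1/2 : ℚ) • v)
    (hbv : k3act Re0 Re1 Ra0 Ra1 Rb0 Rb1 (0, 0, 1) v = 0)
    (hbav : k3act Re0 Re1 Ra0 Ra1 Rb0 Rb1 (0, 0, 1)
        (k3act Re0 Re1 Ra0 Ra1 Rb0 Rb1 (0, 1, 0) v) = ((m : ℚ) / 4) • v) :
    σ = true ∧ m = 1 := by
  subst hmulE hEv hOd
  obtain ⟨x, y⟩ := v
  simp only [k3act_eps, k3act_a, k3act_b, Prod.smul_mk, Prod.mk_eq_zero, Prod.mk.injEq]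
    at hev hbv hbav
  cases σ with
  | false =>
    obtain rfl : y = 0 := hpar
    have hx : x ≠ 0 := fun hx => hv0 (by simp [hx])
    have hhalf : (1 / 2 : ℚ) ∈ spectrum ℚ Re0 :=
      (Module.End.hasEigenvalue_of_hasEigenvector
        ⟨Module.End.mem_eigenspace_iff.mpr hev.1, hx⟩).mem_spectrum
    have := (isIdempotentElem_eps_act_of_even_assoc Re0 Re1 Ra0 Ra1 Rb0 Rb1 hLA0).spectrum_subset
      ℚ hhalf
    norm_num at this
  | true =>
    obtain rfl : x = 0 := hpar
    have hy : y ≠ 0 := fun hy => hv0 (by simp [hy])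
    have hquarter : ((m : ℚ) / 4) • y = (1 / 4 : ℚ) • y := by
      rw [← hbav.2, b_act_a_act_of_odd_jacobi Re0 Re1 Ra0 Ra1 Rb0 Rb1 hLA3, hbv.1, hev.2, map_zero]
      module
    have hm : (m : ℚ) / 4 = 1 / 4 := smul_left_injective ℚ hy hquarter
    exact ⟨rfl, by exact_mod_cast (div_left_inj' (by norm_num)).mp hm⟩

/-- Up to isomorphism, the adjoint module `V_ad` is the only non-trivial
finite-dimensional irreducible LA-module of `K₃`: if a `K₃`-module `V = V0 ⊕ V1` is an
LA-module (the split extension `K₃ ⊕ V` with product `extMul` is again a Lie antialgebra: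
supercommutative and satisfying (LA0)–(LA3) w.r.t. its even part
`{p | p.1.2.1 = 0 ∧ p.1.2.2 = 0 ∧ p.2.2 = 0}` and odd part `{p | p.1.1 = 0 ∧ p.2.1 = 0}`)
and contains a nonzero vector `v` of parity `σ` with `ε·v = ½v`, `b·v = 0` and
`b·(a·v) = (m/4)v`, then `σ = 1` (odd) and `m = 1` (so the module is `Irr(1, ½, 1) ≅ V_ad`). -/
theorem k3_unique_irreducible_LA_module
    (Re0 : V0 →ₗ[ℚ] V0) (Re1 : V1 →ₗ[ℚ] V1) (Ra0 : V0 →ₗ[ℚ] V1)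
    (Ra1 : V1 →ₗ[ℚ] V0) (Rb0 : V0 →ₗ[ℚ] V1) (Rb1 : V1 →ₗ[ℚ] V0)
    (mulE : ((ℚ × ℚ × ℚ) × V0 × V1) → ((ℚ × ℚ × ℚ) × V0 × V1) → ((ℚ × ℚ × ℚ) × V0 × V1))
    (hmulE : mulE = extMul Re0 Re1 Ra0 Ra1 Rb0 Rb1)
    (Ev : Set ((ℚ × ℚ × ℚ) × V0 × V1))
    (Od : Set ((ℚ × ℚ × ℚ) × V0 × V1))
    (hEv : Ev = {p | p.1.2.1 = 0 ∧ p.1.2.2 = 0 ∧ p.2.2 = 0})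
    (hOd : Od = {p | p.1.1 = 0 ∧ p.2.1 = 0})
    -- the split extension is supercommutative
    (hcomm00 : ∀ p ∈ Ev, ∀ q ∈ Ev, mulE p q = mulE q p)
    (hcomm01 : ∀ p ∈ Ev, ∀ q ∈ Od, mulE p q = mulE q p)
    (hanti : ∀ p ∈ Od, ∀ q ∈ Od, mulE p q = - mulE q p)
    -- the split extension satisfies (LA0)-(LA3)
    (hLA0 : ∀ p ∈ Ev, ∀ q ∈ Ev, ∀ r ∈ Ev, mulE p (mulE q r) = mulE (mulE p q) r)
    (hLA1 : ∀ p ∈ Ev, ∀ q ∈ Ev, ∀ r ∈ Od,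
      mulE p (mulE q r) = (1/2 : ℚ) • mulE (mulE p q) r)
    (hLA2 : ∀ p ∈ Ev, ∀ q ∈ Od, ∀ r ∈ Od,
      mulE p (mulE q r) = mulE (mulE p q) r + mulE q (mulE p r))
    (hLA3 : ∀ p ∈ Od, ∀ q ∈ Od, ∀ r ∈ Od,
      mulE p (mulE q r) + mulE q (mulE r p) + mulE r (mulE p q) = 0)
    -- a nonzero vector of parity σ satisfying the relations of Irr(σ, ½, m)
    (σ : Bool) (m : ℕ) (v : V0 × V1)
    (hv0 : v ≠ 0)
    (hpar : if σ then v.1 = 0 else v.2 = 0)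
    (hev : k3act Re0 Re1 Ra0 Ra1 Rb0 Rb1 (1, 0, 0) v = (1/2 : ℚ) • v)
    (hbv : k3act Re0 Re1 Ra0 Ra1 Rb0 Rb1 (0, 0, 1) v = 0)
    (hbav : k3act Re0 Re1 Ra0 Ra1 Rb0 Rb1 (0, 0, 1)
        (k3act Re0 Re1 Ra0 Ra1 Rb0 Rb1 (0, 1, 0) v) = ((m : ℚ) / 4) • v) :
    σ = true ∧ m = 1 :=
  k3_unique_irreducible_LA_module_general Re0 Re1 Ra0 Ra1 Rb0 Rb1 mulE hmulE Ev Od hEv hOd hLA0 hLA3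
    σ m v hv0 hpar hev hbv hbav

end
end

section
/- In the tensor algebra T(a) of a Lie antialgebra a modulo the enveloping relations, for all a, b ∈ a₁ and x ∈ a₀, the element (ax)⊗b + b⊗(ax) − a⊗(bx) − (bx)⊗a equals 2(x⊗(ab) − (ab)⊗x) modulo the ideal generated by the relations ½(u⊗v − v⊗u) − uv (u,v odd), ½(u⊗y + y⊗u) − uy (u odd, y even), y⊗z − yz (y,z even); in particular, since even elements of a₀ commute in U(a), one has π(ax⊙b) = π(a⊙bx) for the map π(a⊙b) = ½(a⊗b + b⊗a). -/
/-- The defining relations of the universal enveloping algebra `U(a)` of a Lie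
antialgebra `a`, inside the tensor algebra `T(a)`:
`½(a⊗b − b⊗a) = ab` for `a, b` odd, `½(a⊗x + x⊗a) = ax` for `a` odd, `x` even, and
`x⊗y = xy` for `x, y` even. -/
inductive EnvRel {K A : Type*} [Field K] [CharZero K] [AddCommGroup A] [Module K A]
    (mul : A →ₗ[K] A →ₗ[K] A) (A0 A1 : Submodule K A) :
    TensorAlgebra K A → TensorAlgebra K A → Prop
  | oddodd : ∀ a ∈ A1, ∀ b ∈ A1,
      EnvRel mul A0 A1
        ((1/2 : K) • (TensorAlgebra.ι K a * TensorAlgebra.ι K b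
            - TensorAlgebra.ι K b * TensorAlgebra.ι K a))
        (TensorAlgebra.ι K (mul a b))
  | oddeven : ∀ a ∈ A1, ∀ x ∈ A0,
      EnvRel mul A0 A1
        ((1/2 : K) • (TensorAlgebra.ι K a * TensorAlgebra.ι K x
            + TensorAlgebra.ι K x * TensorAlgebra.ι K a))
        (TensorAlgebra.ι K (mul a x))
  | eveneven : ∀ x ∈ A0, ∀ y ∈ A0,
      EnvRel mul A0 A1
        (TensorAlgebra.ι K x * TensorAlgebra.ι K y)
        (TensorAlgebra.ι K (mul x y))

/-!
Modulo the odd–even relation, `ax` and `bx` are the anticommutators `½(a∘x)` and `½(b∘x)`, and in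
any associative algebra `(a∘x)∘b − a∘(b∘x) = [x, [a, b]]`. Modulo the odd–odd relation
`[a, b] = 2ab`, which is even and hence commutes with `x` by the even–even relation. So both sides
of the first identity vanish, and the second identity is half of the first.
-/

theorem anticomm_assoc_sub_eq_lie_lie {R : Type*} [Ring R] (a b x : R) :
    (a * x + x * a) * b + b * (a * x + x * a) - a * (b * x + x * b) - (b * x + x * b) * a
      = ⁅x, ⁅a, b⁆⁆ := by
  simp only [Ring.lie_def]
  noncomm_ring

namespace EnvRel

variable {K A : Type*} [Field K] [CharZero K] [AddCommGroup A] [Module K A]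
  {mul : A →ₗ[K] A →ₗ[K] A} {A0 A1 : Submodule K A}

local notation "π" => RingQuot.mkAlgHom K (EnvRel mul A0 A1)
local notation "ι" => TensorAlgebra.ι K

theorem mk_ι_mul_odd_odd {a b : A} (ha : a ∈ A1) (hb : b ∈ A1) :
    π (ι (mul a b)) = (1/2 : K) • ⁅π (ι a), π (ι b)⁆ := by
  simpa [Ring.lie_def] using (RingQuot.mkAlgHom_rel K (oddodd a ha b hb)).symm

theorem mk_ι_mul_odd_even {a x : A} (ha : a ∈ A1) (hx : x ∈ A0) :
    π (ι (mul a x)) = (1/2 : K) • (π (ι a) * π (ι x) + π (ι x) * π (ι a)) := by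
  simpa using (RingQuot.mkAlgHom_rel K (oddeven a ha x hx)).symm

theorem commute_mk_ι_even {x y : A} (hx : x ∈ A0) (hy : y ∈ A0) (hxy : mul x y = mul y x) :
    Commute (π (ι x)) (π (ι y)) := by
  have hxy' := RingQuot.mkAlgHom_rel K (eveneven (mul := mul) (A1 := A1) x hx y hy)
  have hyx' := RingQuot.mkAlgHom_rel K (eveneven (mul := mul) (A1 := A1) y hy x hx)
  rw [map_mul] at hxy' hyx'
  rw [Commute, SemiconjBy, hxy', hyx', hxy]

theorem mk_anticomm_assoc_sub_eq_zero {a b x : A} (ha : a ∈ A1) (hb : b ∈ A1) (hx : x ∈ A0)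
    (hcomm : Commute (π (ι x)) (π (ι (mul a b)))) :
    π (ι (mul a x)) * π (ι b) + π (ι b) * π (ι (mul a x))
      - π (ι a) * π (ι (mul b x)) - π (ι (mul b x)) * π (ι a) = 0 := by
  rw [mk_ι_mul_odd_odd ha hb, Commute.smul_right_iff₀ (one_div_ne_zero two_ne_zero),
    commute_iff_lie_eq] at hcomm
  rw [mk_ι_mul_odd_even ha hx, mk_ι_mul_odd_even hb hx]
  simp only [smul_mul_assoc, mul_smul_comm, ← smul_add, ← smul_sub, anticomm_assoc_sub_eq_lie_lie]
  rw [hcomm, smul_zero]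

end EnvRel

theorem liealgebra_env_pi_well_defined_general
    {K A : Type*} [Field K] [CharZero K] [AddCommGroup A] [Module K A]
    (mul : A →ₗ[K] A →ₗ[K] A) (A0 A1 : Submodule K A)
    (h11 : ∀ a ∈ A1, ∀ b ∈ A1, mul a b ∈ A0)
    (hcomm00 : ∀ x ∈ A0, ∀ y ∈ A0, mul x y = mul y x) :
    ∀ a ∈ A1, ∀ b ∈ A1, ∀ x ∈ A0,
      (RingQuot.mkAlgHom K (EnvRel mul A0 A1)
          (TensorAlgebra.ι K (mul a x) * TensorAlgebra.ι K b
            + TensorAlgebra.ι K b * TensorAlgebra.ι K (mul a x)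
            - TensorAlgebra.ι K a * TensorAlgebra.ι K (mul b x)
            - TensorAlgebra.ι K (mul b x) * TensorAlgebra.ι K a)
        = RingQuot.mkAlgHom K (EnvRel mul A0 A1)
          ((2 : K) • (TensorAlgebra.ι K x * TensorAlgebra.ι K (mul a b)
            - TensorAlgebra.ι K (mul a b) * TensorAlgebra.ι K x))) ∧
      (RingQuot.mkAlgHom K (EnvRel mul A0 A1)
          ((1/2 : K) • (TensorAlgebra.ι K (mul a x) * TensorAlgebra.ι K b
            + TensorAlgebra.ι K b * TensorAlgebra.ι K (mul a x)))
        = RingQuot.mkAlgHom K (EnvRel mul A0 A1)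
          ((1/2 : K) • (TensorAlgebra.ι K a * TensorAlgebra.ι K (mul b x)
            + TensorAlgebra.ι K (mul b x) * TensorAlgebra.ι K a))) := by
  intro a ha b hb x hx
  have hab := h11 a ha b hb
  have hcomm := EnvRel.commute_mk_ι_even (A1 := A1) hx hab (hcomm00 x hx _ hab)
  have hzero := EnvRel.mk_anticomm_assoc_sub_eq_zero ha hb hx hcomm
  simp only [map_add, map_sub, map_mul, map_smul]
  exact ⟨by rw [hzero, hcomm.eq, sub_self, smul_zero],
    by rw [sub_sub, sub_eq_zero] at hzero; rw [hzero]⟩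

/-- In `U(a) = T(a)/⟨P⟩`, for all odd `a, b` and even `x`:
`(ax)⊗b + b⊗(ax) − a⊗(bx) − (bx)⊗a = 2(x⊗(ab) − (ab)⊗x)`; in particular, since even
elements commute in `U(a)`, `π(ax⊙b) = π(a⊙bx)` for `π(a⊙b) = ½(a⊗b + b⊗a)`. -/
theorem liealgebra_env_pi_well_defined
    {K A : Type*} [Field K] [CharZero K] [AddCommGroup A] [Module K A]
    (mul : A →ₗ[K] A →ₗ[K] A) (A0 A1 : Submodule K A)
    (h00 : ∀ x ∈ A0, ∀ y ∈ A0, mul x y ∈ A0)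
    (h10 : ∀ a ∈ A1, ∀ x ∈ A0, mul a x ∈ A1)
    (h11 : ∀ a ∈ A1, ∀ b ∈ A1, mul a b ∈ A0)
    (hcomm00 : ∀ x ∈ A0, ∀ y ∈ A0, mul x y = mul y x)
    (hcomm01 : ∀ x ∈ A0, ∀ a ∈ A1, mul x a = mul a x)
    (hanti : ∀ a ∈ A1, ∀ b ∈ A1, mul a b = - mul b a) :
    ∀ a ∈ A1, ∀ b ∈ A1, ∀ x ∈ A0,
      (RingQuot.mkAlgHom K (EnvRel mul A0 A1)
          (TensorAlgebra.ι K (mul a x) * TensorAlgebra.ι K b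
            + TensorAlgebra.ι K b * TensorAlgebra.ι K (mul a x)
            - TensorAlgebra.ι K a * TensorAlgebra.ι K (mul b x)
            - TensorAlgebra.ι K (mul b x) * TensorAlgebra.ι K a)
        = RingQuot.mkAlgHom K (EnvRel mul A0 A1)
          ((2 : K) • (TensorAlgebra.ι K x * TensorAlgebra.ι K (mul a b)
            - TensorAlgebra.ι K (mul a b) * TensorAlgebra.ι K x))) ∧
      (RingQuot.mkAlgHom K (EnvRel mul A0 A1)
          ((1/2 : K) • (TensorAlgebra.ι K (mul a x) * TensorAlgebra.ι K b
            + TensorAlgebra.ι K b * TensorAlgebra.ι K (mul a x)))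
        = RingQuot.mkAlgHom K (EnvRel mul A0 A1)
          ((1/2 : K) • (TensorAlgebra.ι K a * TensorAlgebra.ι K (mul b x)
            + TensorAlgebra.ι K (mul b x) * TensorAlgebra.ι K a))) :=
  liealgebra_env_pi_well_defined_general mul A0 A1 h11 hcomm00
end
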